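/- arXiv:1811.10058 — 6 statements merged into one kernel-verified Lean document; each statement's English description precedes it below -/
import Mathlib

section
/- Let $S$ be a countable set and $(X_t)_{t\in\mathbb{Z}}$ a stationary stochastic process taking values in $S$. Then almost surely, for every $x\in S$ that appears in the trajectory $\{X_t : t\in\mathbb{Z}\}$, the set $\{t\in\mathbb{Z} : X_t = x\}$ is unbounded above and unbounded below. -/
/-!
The law of the trajectory is a probability measure on `ℤ → S` preserved by the shift
`f ↦ f (· + 1)`, hence also by its inverse. Both shifts are therefore conservative, and
Poincaré recurrence applied to the countably many cylinders `{f | f t = x}` shows that almost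
every trajectory returns to its value at time `t` infinitely often in both time directions.
-/

open MeasureTheory Filter

section IntShift

variable {S : Type*}

def intShift (k : ℤ) (f : ℤ → S) : ℤ → S := fun t => f (t + k)

lemma iterate_intShift_apply (k : ℤ) (n : ℕ) (f : ℤ → S) (t : ℤ) :
    (intShift k)^[n] f t = f (t + n * k) := by
  induction n generalizing f with
  | zero => simp
  | succ n ih =>
    rw [Function.iterate_succ_apply, ih]
    simp only [intShift]
    congr 1
    push_cast
    ring

lemma intShift_neg_comp_intShift (k : ℤ) : intShift (S := S) (-k) ∘ intShift k = id := by
  funext f t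
  simp [intShift]

variable [MeasurableSpace S]

lemma measurable_intShift (k : ℤ) : Measurable (intShift (S := S) k) :=
  measurable_pi_lambda _ fun _ => measurable_pi_apply _

lemma MeasureTheory.MeasurePreserving.intShift_neg {μ : Measure (ℤ → S)} {k : ℤ}
    (h : MeasurePreserving (intShift k) μ μ) : MeasurePreserving (intShift (-k)) μ μ := by
  refine ⟨measurable_intShift (-k), ?_⟩
  conv_lhs => rw [← h.map_eq]
  rw [Measure.map_map (measurable_intShift _) h.measurable, intShift_neg_comp_intShift,
    Measure.map_id]

lemma ae_frequently_eq_of_measurePreserving_intShift [MeasurableSingletonClass S] [Countable S]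
    {μ : Measure (ℤ → S)} [IsFiniteMeasure μ] {k : ℤ} (h : MeasurePreserving (intShift k) μ μ) :
    ∀ᵐ f ∂μ, ∀ t : ℤ, ∃ᶠ n : ℕ in atTop, f (t + n * k) = f t := by
  rw [ae_all_iff]
  intro t
  have hrec : ∀ᵐ f ∂μ, ∀ x : S, f t = x → ∃ᶠ n : ℕ in atTop, f (t + n * k) = x := by
    rw [ae_all_iff]
    intro x
    have hcyl : MeasurableSet {f : ℤ → S | f t = x} :=
      measurableSet_eq_fun (measurable_pi_apply t) measurable_const
    simpa only [Set.mem_ofPred_eq, iterate_intShift_apply] using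
      h.conservative.ae_mem_imp_frequently_image_mem hcyl.nullMeasurableSet
  filter_upwards [hrec] with f hf using hf _ rfl

end IntShift

/-- A stationary process indexed by `ℤ` with values in a countable space is a.s.
bi-recurrent for every state appearing in its trajectory: the set of visit
times to any such state is unbounded above and below. -/
theorem stationary_process_birecurrent
    {Ω S : Type*} [MeasurableSpace Ω] [MeasurableSpace S] [MeasurableSingletonClass S]
    [Countable S] (P : Measure Ω) [IsProbabilityMeasure P]
    (X : ℤ → Ω → S) (hXmeas : ∀ t, Measurable (X t))
    (hstat : Measure.map (fun ω (t : ℤ) => X (t + 1) ω) P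
      = Measure.map (fun ω (t : ℤ) => X t ω) P) :
    ∀ᵐ ω ∂P, ∀ x : S, (∃ t : ℤ, X t ω = x) →
      (∀ n : ℤ, ∃ t, n ≤ t ∧ X t ω = x) ∧ (∀ n : ℤ, ∃ t, t ≤ n ∧ X t ω = x) := by
  have htraj : Measurable fun ω (t : ℤ) => X t ω := measurable_pi_lambda _ hXmeas
  set μ := P.map fun ω (t : ℤ) => X t ω
  have : IsProbabilityMeasure μ := Measure.isProbabilityMeasure_map htraj.aemeasurable
  have hforward : MeasurePreserving (intShift 1) μ μ :=
    ⟨measurable_intShift 1, by rw [Measure.map_map (measurable_intShift 1) htraj]; exact hstat⟩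
  have hrec {k : ℤ} (hk : MeasurePreserving (intShift k) μ μ) :=
    ae_of_ae_map htraj.aemeasurable (ae_frequently_eq_of_measurePreserving_intShift hk)
  filter_upwards [hrec hforward, hrec hforward.intShift_neg] with ω hup hdown
  rintro x ⟨t, rfl⟩
  constructor
  · intro n
    obtain ⟨m, hm, hx⟩ := (hup t).forall_exists_of_atTop (n - t).toNat
    exact ⟨t + m * 1, by omega, hx⟩
  · intro n
    obtain ⟨m, hm, hx⟩ := (hdown t).forall_exists_of_atTop (t - n).toNat
    exact ⟨t + m * (-1), by omega, hx⟩
end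

section
/- Suppose $P$ is an irreducible, aperiodic, positive recurrent transition matrix on a countable state space $S$ with stationary distribution $\pi$, and suppose $P^n$ converges uniformly to $\pi$: $\sup_{x\in S}\|P^n(x,\cdot)-\pi\|\to 0$ as $n\to\infty$. Then every Markov chain $(X_t)_{t\in\mathbb{Z}}$ indexed by all of $\mathbb{Z}$ with transition matrix $P$ is stationary; in particular $X_t\sim\pi$ for every $t\in\mathbb{Z}$. -/
/-!
Write `μ t` for the law of `X t`. The Markov property gives `μ (t + 1) = μ t P`, and since the
chain has an infinite past, `μ t = μ (t - n) Pⁿ` for every `n`. A mixture of the rows of `Pⁿ` is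
no further from `π` than the furthest row, so `‖μ t - π‖ ≤ sup_x ‖Pⁿ(x, ·) - π‖ → 0`: every
`X t` has law `π`. The probability of a path segment `X t = x₀, X (t - 1) = x₁, …, X (t - k) = xₖ`
is then `π xₖ * ∏ p xⱼ₊₁ xⱼ`, independent of `t`; hence so are the laws of all finite windows of
the chain, and these determine the law of the whole path.
-/

open MeasureTheory ProbabilityTheory ENNReal Filter
open scoped Classical Topology

/-- `n`-step transition probabilities of a transition matrix. -/
noncomputable def matpow {S : Type*} (p : S → S → ℝ≥0∞) : ℕ → S → S → ℝ≥0∞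
  | 0, x, y => if x = y then 1 else 0
  | n+1, x, y => ∑' z, matpow p n x z * p z y

/-- Irreducibility of a transition matrix. -/
def Irreducible' {S : Type*} (p : S → S → ℝ≥0∞) : Prop := ∀ x y, ∃ n, 0 < matpow p n x y

/-- Aperiodicity: for each state, the gcd of the set of return times is 1. -/
def Aperiodic' {S : Type*} (p : S → S → ℝ≥0∞) : Prop :=
  ∀ x, ∀ d : ℕ, (∀ n : ℕ, 0 < n → 0 < matpow p n x x → d ∣ n) → d = 1

/-- First return probability. -/
noncomputable def fret {S : Type*} (p : S → S → ℝ≥0∞) (x : S) : ℕ → S → ℝ≥0∞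
  | 0, _ => 0
  | n+1, y => ∑' z, p y z * (if z = x then (if n = 0 then 1 else 0) else fret p x n z)

/-- Positive recurrence of a state for `p`. -/
def PosRecMatrix {S : Type*} (p : S → S → ℝ≥0∞) (x : S) : Prop :=
  (∑' n : ℕ, fret p x n x) = 1 ∧ (∑' n : ℕ, (n : ℝ≥0∞) * fret p x n x) < ⊤

/-- Total variation distance between two (sub)probability vectors on `S`. -/
noncomputable def tvd {S : Type*} (μ ν : S → ℝ≥0∞) : ℝ≥0∞ :=
  ∑' y, ((μ y - ν y) + (ν y - μ y))

theorem matpow_succ' {S : Type*} (p : S → S → ℝ≥0∞) (n : ℕ) (x y : S) :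
    matpow p (n + 1) x y = ∑' z, p x z * matpow p n z y := by
  induction n generalizing y with
  | zero =>
    simp only [matpow, mul_ite, mul_one, mul_zero, ite_mul, one_mul, zero_mul]
    rw [tsum_eq_single x (fun z hz => by simp [Ne.symm hz]), tsum_eq_single y (by simp_all)]
    simp
  | succ n ih =>
    calc matpow p (n + 2) x y = ∑' z, (∑' w, p x w * matpow p n w z) * p z y := by
          simp only [matpow, ← ih]
      _ = ∑' w, p x w * ∑' z, matpow p n w z * p z y := by
          simp only [← ENNReal.tsum_mul_right, ← ENNReal.tsum_mul_left, mul_assoc]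
          exact ENNReal.tsum_comm
      _ = ∑' w, p x w * matpow p (n + 1) w y := rfl

theorem tsum_mul_matpow_zero {S : Type*} (p : S → S → ℝ≥0∞) (μ : S → ℝ≥0∞) (x : S) :
    ∑' z, μ z * matpow p 0 z x = μ x := by
  rw [tsum_eq_single x (fun z hz => by simp [matpow, hz])]
  simp [matpow]

theorem ENNReal.tsum_sub_tsum_le {S : Type*} (f g : S → ℝ≥0∞) :
    ∑' z, f z - ∑' z, g z ≤ ∑' z, (f z - g z) := by
  rw [tsub_le_iff_right, ← ENNReal.tsum_add]
  exact ENNReal.tsum_le_tsum fun z => le_tsub_add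

theorem ENNReal.tsum_mul_le_iSup {S : Type*} {μ : S → ℝ≥0∞} (hμ : ∑' z, μ z = 1)
    (f : S → ℝ≥0∞) : ∑' z, μ z * f z ≤ ⨆ z, f z :=
  calc ∑' z, μ z * f z ≤ ∑' z, μ z * ⨆ z, f z :=
        ENNReal.tsum_le_tsum fun z => mul_le_mul' le_rfl (le_iSup f z)
    _ = ⨆ z, f z := by rw [ENNReal.tsum_mul_right, hμ, one_mul]

theorem eq_of_tvd_eq_zero {S : Type*} {μ ν : S → ℝ≥0∞} (h : tvd μ ν = 0) : μ = ν := by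
  funext y
  have hy := add_eq_zero.mp (ENNReal.tsum_eq_zero.mp h y)
  exact le_antisymm (tsub_eq_zero_iff_le.mp hy.1) (tsub_eq_zero_iff_le.mp hy.2)

theorem tvd_tsum_mul_le {S : Type*} {μ : S → ℝ≥0∞} (hμ : ∑' z, μ z = 1)
    (q : S → S → ℝ≥0∞) (π : S → ℝ≥0∞) :
    tvd (fun y => ∑' z, μ z * q z y) π ≤ ∑' z, μ z * tvd (q z) π := by
  have hπ : ∀ y, π y = ∑' z, μ z * π y := fun y => by rw [ENNReal.tsum_mul_right, hμ, one_mul]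
  calc tvd (fun y => ∑' z, μ z * q z y) π
      ≤ ∑' y, ∑' z, μ z * ((q z y - π y) + (π y - q z y)) := by
        refine ENNReal.tsum_le_tsum fun y => ?_
        conv_lhs => rw [hπ y]
        refine (add_le_add (ENNReal.tsum_sub_tsum_le _ _) (ENNReal.tsum_sub_tsum_le _ _)).trans ?_
        rw [← ENNReal.tsum_add]
        exact ENNReal.tsum_le_tsum fun z => mul_add (μ z) _ _ ▸
          add_le_add le_mul_tsub le_mul_tsub
    _ = ∑' z, μ z * tvd (q z) π := by
        rw [ENNReal.tsum_comm]
        simp only [tvd, ENNReal.tsum_mul_left]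

section Marginals

variable {S : Type*} {p : S → S → ℝ≥0∞} {μ : ℤ → S → ℝ≥0∞}

theorem eq_tsum_mul_matpow (hstep : ∀ t x, μ (t + 1) x = ∑' z, μ t z * p z x)
    (n : ℕ) (t : ℤ) (x : S) : μ t x = ∑' z, μ (t - n) z * matpow p n z x := by
  induction n generalizing x with
  | zero => rw [tsum_mul_matpow_zero, Nat.cast_zero, sub_zero]
  | succ n ih =>
    have hprev : ∀ z, μ (t - n) z = ∑' w, μ (t - (n + 1 : ℕ)) w * p w z := fun z => by
      rw [← hstep]; congr 1; push_cast; ring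
    calc μ t x = ∑' z, (∑' w, μ (t - (n + 1 : ℕ)) w * p w z) * matpow p n z x := by
          simp only [ih, hprev]
      _ = ∑' w, μ (t - (n + 1 : ℕ)) w * ∑' z, p w z * matpow p n z x := by
          simp only [← ENNReal.tsum_mul_right, ← ENNReal.tsum_mul_left, mul_assoc]
          exact ENNReal.tsum_comm
      _ = ∑' w, μ (t - (n + 1 : ℕ)) w * matpow p (n + 1) w x := by
          simp only [matpow_succ']

theorem eq_of_tendsto_iSup_tvd_matpow {π : S → ℝ≥0∞} (hsum : ∀ t, ∑' z, μ t z = 1)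
    (hstep : ∀ t x, μ (t + 1) x = ∑' z, μ t z * p z x)
    (huniform : Tendsto (fun n => ⨆ x : S, tvd (matpow p n x) π) atTop (𝓝 0)) (t : ℤ) :
    μ t = π := by
  have hbound : ∀ n : ℕ, tvd (μ t) π ≤ ⨆ x : S, tvd (matpow p n x) π := fun n =>
    calc tvd (μ t) π = tvd (fun y => ∑' z, μ (t - n) z * matpow p n z y) π := by
          simp only [← eq_tsum_mul_matpow hstep]
      _ ≤ ∑' z, μ (t - n) z * tvd (matpow p n z) π := tvd_tsum_mul_le (hsum _) _ _
      _ ≤ ⨆ x : S, tvd (matpow p n x) π := ENNReal.tsum_mul_le_iSup (hsum _) _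
  exact eq_of_tvd_eq_zero (le_antisymm (ge_of_tendsto' huniform hbound) zero_le)

end Marginals

theorem measure_eq_tsum_measure_inter_preimage_singleton {α β : Type*} [MeasurableSpace α]
    [MeasurableSpace β] [MeasurableSingletonClass β] [Countable β] (μ : Measure α) {f : α → β}
    (hf : Measurable f) (A : Set α) : μ A = ∑' y, μ (A ∩ f ⁻¹' {y}) := by
  have := tsum_measure_preimage_singleton (μ := μ.restrict A) Set.countable_univ
    fun y _ => hf (measurableSet_singleton y)
  rw [Set.preimage_univ, Measure.restrict_apply_univ,
    tsum_univ (f := fun y => μ.restrict A (f ⁻¹' {y}))] at this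
  simp only [← this, Measure.restrict_apply (hf (measurableSet_singleton _)), Set.inter_comm]

section Window

variable {Ω S : Type*} {X : ℤ → Ω → S}

def window (X : ℤ → Ω → S) (t : ℤ) (k : ℕ) (ω : Ω) : Fin (k + 1) → S :=
  fun i => X (t - i) ω

theorem window_preimage_singleton (t : ℤ) (k : ℕ) (w : Fin (k + 1) → S) :
    window X t k ⁻¹' {w} = {ω | ∀ i : ℕ, i ≤ k → X (t - i) ω = w (Fin.ofNat (k + 1) i)} := by
  ext ω
  simp only [Set.mem_preimage, Set.mem_singleton_iff, funext_iff, window]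
  refine ⟨fun h i hi => ?_, fun h i => ?_⟩
  · simpa [Fin.ext_iff, Nat.mod_eq_of_lt (Nat.lt_succ_of_le hi)] using h (Fin.ofNat (k + 1) i)
  · simpa using h i (Nat.lt_succ_iff.mp i.2)

variable [MeasurableSpace Ω] [MeasurableSpace S] {P : Measure Ω}

theorem measurable_window (hX : ∀ t, Measurable (X t)) (t : ℤ) (k : ℕ) :
    Measurable (window X t k) :=
  measurable_pi_lambda _ fun _ => hX _

theorem map_window_eq_of_measure_path_eq [MeasurableSingletonClass S] [Countable S]
    (hX : ∀ t, Measurable (X t))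
    (hpath : ∀ (k : ℕ) (t s : ℤ) (xs : ℕ → S), P {ω | ∀ i : ℕ, i ≤ k → X (t - i) ω = xs i}
      = P {ω | ∀ i : ℕ, i ≤ k → X (s - i) ω = xs i}) (k : ℕ) (t s : ℤ) :
    P.map (window X t k) = P.map (window X s k) := by
  refine Measure.ext_of_singleton fun w => ?_
  rw [Measure.map_apply (measurable_window hX t k) (measurableSet_singleton w),
    Measure.map_apply (measurable_window hX s k) (measurableSet_singleton w),
    window_preimage_singleton, window_preimage_singleton, hpath]

theorem map_shift_eq_of_map_window_eq [IsFiniteMeasure P] (hX : ∀ t, Measurable (X t))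
    (hwin : ∀ (k : ℕ) (t s : ℤ), P.map (window X t k) = P.map (window X s k)) (c : ℤ) :
    P.map (fun ω t => X (t + c) ω) = P.map (fun ω t => X t ω) := by
  refine IsProjectiveLimit.unique (P := fun J => (P.map fun ω t => X t ω).map J.restrict)
    (fun J => ?_) fun J => rfl
  obtain ⟨N, hN⟩ : ∃ N : ℕ, ∀ j ∈ J, j.natAbs ≤ N :=
    ⟨J.sup Int.natAbs, fun j hj => Finset.le_sup (f := Int.natAbs) hj⟩
  have hlt : ∀ j : J, (N - j : ℤ).toNat < 2 * N + 1 := fun j => by have := hN j j.2; omega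
  let g : (Fin (2 * N + 1) → S) → J → S := fun w j => w ⟨_, hlt j⟩
  have hg : Measurable g := measurable_pi_lambda _ fun _ => measurable_pi_apply _
  have hshift : ∀ c : ℤ, Measurable fun ω t => X (t + c) ω := fun c =>
    measurable_pi_lambda _ fun _ => hX _
  -- the coordinates in `J ⊆ [-N, N]` of the path shifted by `c` are read off the window of
  -- length `2N + 1` ending at `N + c`
  have hfactor : ∀ c : ℤ, ((P.map fun ω t => X (t + c) ω).map J.restrict)
      = (P.map (window X (N + c) (2 * N))).map g := fun c => by
    rw [Measure.map_map (Finset.measurable_restrict J) (hshift c),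
      Measure.map_map hg (measurable_window hX _ _)]
    congr 1
    funext ω j
    have := hN j j.2
    simp only [Function.comp, Finset.restrict, g, window]
    congr 1
    omega
  simpa [hfactor, hwin _ (N + c) N] using (hfactor 0).symm

end Window

section Chain

variable {Ω S : Type*} [MeasurableSpace Ω] {P : Measure Ω} {X : ℤ → Ω → S}

def IsMarkovChain (P : Measure Ω) (p : S → S → ℝ≥0∞) (X : ℤ → Ω → S) : Prop :=
  ∀ (t : ℤ) (k : ℕ) (x : S) (xs : ℕ → S),
    P ({ω | X (t + 1) ω = x} ∩ {ω | ∀ i : ℕ, i ≤ k → X (t - i) ω = xs i})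
      = p (xs 0) x * P {ω | ∀ i : ℕ, i ≤ k → X (t - i) ω = xs i}

namespace IsMarkovChain

variable {p : S → S → ℝ≥0∞} {π : S → ℝ≥0∞}

theorem measure_path_eq (hmarkov : IsMarkovChain P p X)
    (hmarg : ∀ t y, P {ω | X t ω = y} = π y) (k : ℕ) (t : ℤ) (xs : ℕ → S) :
    P {ω | ∀ i : ℕ, i ≤ k → X (t - i) ω = xs i}
      = π (xs k) * ∏ j ∈ Finset.range k, p (xs (j + 1)) (xs j) := by
  induction k generalizing t xs with
  | zero => simp [hmarg]
  | succ k ih =>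
    have hsplit : {ω | ∀ i : ℕ, i ≤ k + 1 → X (t - i) ω = xs i}
        = {ω | X (t - 1 + 1) ω = xs 0}
          ∩ {ω | ∀ i : ℕ, i ≤ k → X (t - 1 - i) ω = xs (i + 1)} := by
      ext ω
      simp only [Set.mem_inter_iff, sub_add_cancel]
      refine ⟨fun h => ⟨by simpa using h 0 (by omega), fun i hi => ?_⟩, fun ⟨h0, h⟩ i hi => ?_⟩
      · simpa [sub_sub, add_comm] using h (i + 1) (by omega)
      · rcases i with _ | i
        · simpa using h0
        · simpa [sub_sub, add_comm] using h i (by omega)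
    rw [hsplit, hmarkov, ih, Finset.prod_range_succ']
    ring

variable [MeasurableSpace S] [MeasurableSingletonClass S] [Countable S]

theorem measure_succ_eq (hX : ∀ t, Measurable (X t)) (hmarkov : IsMarkovChain P p X)
    (t : ℤ) (x : S) : P {ω | X (t + 1) ω = x} = ∑' z, P {ω | X t ω = z} * p z x := by
  rw [measure_eq_tsum_measure_inter_preimage_singleton P (hX t)]
  refine tsum_congr fun z => ?_
  have hpath : {ω | ∀ i : ℕ, i ≤ 0 → X (t - i) ω = z} = X t ⁻¹' {z} := by
    ext ω; simp
  have := hmarkov t 0 x fun _ => z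
  rw [hpath] at this
  rw [this, mul_comm]
  rfl

theorem measure_eq_of_tendsto [IsProbabilityMeasure P] (hX : ∀ t, Measurable (X t))
    (hmarkov : IsMarkovChain P p X)
    (huniform : Tendsto (fun n => ⨆ x : S, tvd (matpow p n x) π) atTop (𝓝 0)) (t : ℤ) (y : S) :
    P {ω | X t ω = y} = π y := by
  refine congrFun (eq_of_tendsto_iSup_tvd_matpow (μ := fun t y => P {ω | X t ω = y})
    (fun t => ?_) (measure_succ_eq hX hmarkov) huniform t) y
  have := measure_eq_tsum_measure_inter_preimage_singleton P (hX t) Set.univ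
  rw [measure_univ] at this
  simp only [Set.univ_inter] at this
  exact this.symm

end IsMarkovChain

end Chain

theorem bi_infinite_chain_stationary_of_uniform_convergence_general
    {Ω S : Type*} [MeasurableSpace Ω] [MeasurableSpace S] [MeasurableSingletonClass S]
    [Countable S] (P : Measure Ω) [IsProbabilityMeasure P]
    (p : S → S → ℝ≥0∞)
    (π : S → ℝ≥0∞)
    (huniform : Tendsto (fun n => ⨆ x : S, tvd (matpow p n x) π) atTop (𝓝 0))
    (X : ℤ → Ω → S) (hXmeas : ∀ t, Measurable (X t))
    (hmarkov : ∀ (t : ℤ) (k : ℕ) (x : S) (xs : ℕ → S),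
      P ({ω | X (t + 1) ω = x} ∩ {ω | ∀ i : ℕ, i ≤ k → X (t - i) ω = xs i})
        = p (xs 0) x * P {ω | ∀ i : ℕ, i ≤ k → X (t - i) ω = xs i}) :
    (Measure.map (fun ω (t : ℤ) => X (t + 1) ω) P
        = Measure.map (fun ω (t : ℤ) => X t ω) P)
      ∧ ∀ (t : ℤ) (y : S), P {ω | X t ω = y} = π y := by
  have hmarg := IsMarkovChain.measure_eq_of_tendsto hXmeas hmarkov huniform
  have hpath : ∀ (k : ℕ) (t s : ℤ) (xs : ℕ → S),
      P {ω | ∀ i : ℕ, i ≤ k → X (t - i) ω = xs i}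
        = P {ω | ∀ i : ℕ, i ≤ k → X (s - i) ω = xs i} := fun k t s xs => by
    rw [IsMarkovChain.measure_path_eq hmarkov hmarg, IsMarkovChain.measure_path_eq hmarkov hmarg]
  exact ⟨map_shift_eq_of_map_window_eq hXmeas (map_window_eq_of_measure_path_eq hXmeas hpath) 1,
    hmarg⟩

/-- If `Pⁿ` converges uniformly to the stationary distribution `π`, then every
Markov chain indexed by all of `ℤ` with transition matrix `P` is stationary; in
particular `X_t ∼ π` for every `t ∈ ℤ`. -/
theorem bi_infinite_chain_stationary_of_uniform_convergence
    {Ω S : Type*} [MeasurableSpace Ω] [MeasurableSpace S] [MeasurableSingletonClass S]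
    [Countable S] (P : Measure Ω) [IsProbabilityMeasure P]
    (p : S → S → ℝ≥0∞) (hrow : ∀ x, ∑' y, p x y = 1)
    (hirr : Irreducible' p) (haper : Aperiodic' p) (hposrec : ∀ x, PosRecMatrix p x)
    (π : S → ℝ≥0∞) (hπsum : ∑' x, π x = 1)
    (hπstat : ∀ y, ∑' x, π x * p x y = π y)
    (huniform : Tendsto (fun n => ⨆ x : S, tvd (matpow p n x) π) atTop (𝓝 0))
    (X : ℤ → Ω → S) (hXmeas : ∀ t, Measurable (X t))
    (hmarkov : ∀ (t : ℤ) (k : ℕ) (x : S) (xs : ℕ → S),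
      P ({ω | X (t + 1) ω = x} ∩ {ω | ∀ i : ℕ, i ≤ k → X (t - i) ω = xs i})
        = p (xs 0) x * P {ω | ∀ i : ℕ, i ≤ k → X (t - i) ω = xs i}) :
    (Measure.map (fun ω (t : ℤ) => X (t + 1) ω) P
        = Measure.map (fun ω (t : ℤ) => X t ω) P)
      ∧ ∀ (t : ℤ) (y : S), P {ω | X t ω = y} = π y :=
  bi_infinite_chain_stationary_of_uniform_convergence_general P p π huniform X hXmeas hmarkov
end

section
/- Suppose the Doeblin graph $\mathbb{G}$ is almost surely connected (an EFT) and $x^*$ is positive recurrent. Then there exists a state path $(\beta_t)_{t\in\mathbb{Z}}$ in $\mathbb{G}$, unique up to null sets, whose set of visit times to $x^*$ is a.s. unbounded above and below. Moreover $(\beta_t)_{t\in\mathbb{Z}}$ is stationary, for each $t$ the random variable $\beta_t$ is measurable with respect to $\sigma(\xi_s : s < t)$, and $(\beta_t)$ is bi-recurrent for every positive recurrent state $x\in S$. -/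
open MeasureTheory ProbabilityTheory ENNReal
open scoped Classical

/-- The state path in the Doeblin graph. -/
def Fpath {S Ξ Ω : Type*} (h : S → Ξ → S) (ξ : ℤ → Ω → Ξ) (ω : Ω) (t : ℤ) (x : S) : ℕ → S
  | 0 => x
  | n+1 => h (Fpath h ξ ω t x n) (ξ (t + n) ω)

/-- Time until return to `y` of the path started at `(t,x)` (`⊤` if no return). -/
noncomputable def retTime {S Ξ Ω : Type*} (h : S → Ξ → S) (ξ : ℤ → Ω → Ξ)
    (t : ℤ) (x y : S) (ω : Ω) : ℝ≥0∞ :=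
  sInf {c : ℝ≥0∞ | ∃ r : ℕ, c = r ∧ 0 < r ∧ Fpath h ξ ω t x r = y}

/-- Two vertices of the Doeblin graph are in the same component iff their
forward paths merge. -/
def Merge {S Ξ Ω : Type*} (h : S → Ξ → S) (ξ : ℤ → Ω → Ξ) (ω : Ω) (u v : ℤ × S) : Prop :=
  ∃ k l : ℕ, u.1 + k = v.1 + l ∧ Fpath h ξ ω u.1 u.2 k = Fpath h ξ ω v.1 v.2 l

/-!
Call `v` a renewal time for `x` if every path started at `x` early enough is at `x` at time `v`.
Renewal times are coherent (the path from one of them visits `x` at every later one), so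
`β_t := F^{(v,x)}_t` does not depend on the renewal time `v ≤ t`, and `β` is the backward limit.
By positive recurrence and Borel–Cantelli, for all `u ≪ 0` the path from `(u, x)` returns to `x`
before time `0`; hence every path from `x` started early enough visits `x` in a fixed finite
window, and once the finitely many paths started in that window have coalesced we reach a
renewal time. Returns make the renewal times unbounded above, and stationarity makes them
unbounded below: the events `{the first renewal time is k}` would be disjoint and equally likely.
So `β` is a path that is bi-recurrent for `x`, and any path visiting `x` arbitrarily early agrees
with it. For two positive recurrent states the two limit paths coalesce, and the same argument
applied to the first time from which they agree shows that they agree everywhere.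
-/

lemma not_bddAbove_of_forall_exists_gt {X : Type*} [LinearOrder X] [SuccOrder X]
    [IsSuccArchimedean X] {s : Set X} (hne : s.Nonempty) (hs : ∀ v ∈ s, ∃ w ∈ s, v < w) :
    ¬BddAbove s := fun hbdd =>
  let ⟨v, hv, hv_max⟩ := hbdd.exists_isGreatest_of_nonempty hne
  let ⟨_, hw, hvw⟩ := hs v hv
  (hv_max hw).not_gt hvw

lemma measurable_const_and {α : Type*} [MeasurableSpace α] {c : Prop} {p : α → Prop}
    (hp : c → Measurable p) : Measurable fun a => c ∧ p a := by
  by_cases hc : c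
  · simpa only [hc, true_and] using hp hc
  · simpa only [hc, false_and] using measurable_const

lemma ENNReal.tsum_ite_natCast_add_one_le_le (a : ℝ≥0∞) :
    ∑' n : ℕ, (if (n + 1 : ℝ≥0∞) ≤ a then 1 else 0) ≤ a := by
  refine ENNReal.tsum_le_of_sum_range_le fun m => ?_
  induction m with
  | zero => simp
  | succ m ih =>
    by_cases hm : (m + 1 : ℝ≥0∞) ≤ a
    · calc ∑ n ∈ Finset.range (m + 1), (if (n + 1 : ℝ≥0∞) ≤ a then 1 else 0)
          ≤ ∑ n ∈ Finset.range (m + 1), (1 : ℝ≥0∞) :=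
            Finset.sum_le_sum fun n _ => by split_ifs <;> simp
        _ ≤ a := by simpa using hm
    · rwa [Finset.sum_range_succ, if_neg hm, add_zero]

namespace MeasureTheory

variable {Ω α : Type*} [MeasurableSpace Ω] {P : Measure Ω}

lemma tsum_measure_natCast_add_one_le_le_lintegral {N : Ω → ℝ≥0∞} (hN : Measurable N) :
    ∑' n : ℕ, P {ω | (n + 1 : ℝ≥0∞) ≤ N ω} ≤ ∫⁻ ω, N ω ∂P := by
  have hmeas : ∀ n : ℕ, MeasurableSet {ω | (n + 1 : ℝ≥0∞) ≤ N ω} := fun n => hN measurableSet_Ici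
  calc ∑' n : ℕ, P {ω | (n + 1 : ℝ≥0∞) ≤ N ω}
      = ∫⁻ ω, ∑' n : ℕ, {ω | (n + 1 : ℝ≥0∞) ≤ N ω}.indicator 1 ω ∂P := by
        rw [lintegral_tsum fun n => (measurable_one.indicator (hmeas n)).aemeasurable]
        simp only [lintegral_indicator_one (hmeas _)]
    _ ≤ ∫⁻ ω, N ω ∂P := lintegral_mono fun ω => by
        simpa [Set.indicator_apply] using ENNReal.tsum_ite_natCast_add_one_le_le (N ω)

namespace MeasurePreserving

variable [MeasurableSpace α] {θ : Ω → Ω} {F : ℤ → Ω → α}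

lemma map_shift_eq (hθ : MeasurePreserving θ P P) (hF : ∀ t, Measurable (F t))
    (hshift : ∀ t ω, F t (θ ω) = F (t + 1) ω) :
    P.map (fun ω t => F (t + 1) ω) = P.map (fun ω t => F t ω) := by
  have hcomp : (fun ω t => F (t + 1) ω) = (fun ω t => F t ω) ∘ θ :=
    funext fun ω => funext fun t => (hshift t ω).symm
  rw [hcomp, ← Measure.map_map (measurable_pi_lambda _ hF) hθ.measurable, hθ.map_eq]

lemma identDistrib_of_shift (hθ : MeasurePreserving θ P P) (hF : ∀ t, Measurable (F t))
    (hshift : ∀ t ω, F t (θ ω) = F (t + 1) ω) (t : ℤ) : IdentDistrib (F t) (F 0) P P := by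
  have hstep : ∀ t, IdentDistrib (F (t + 1)) (F t) P P := fun t =>
    ⟨(hF _).aemeasurable, (hF _).aemeasurable, by
      rw [show F (t + 1) = F t ∘ θ from funext fun ω => (hshift t ω).symm,
        ← Measure.map_map (hF t) hθ.measurable, hθ.map_eq]⟩
  induction t using Int.induction_on with
  | zero => exact IdentDistrib.refl (hF 0).aemeasurable
  | succ k ih => exact (hstep k).trans ih
  | pred k ih =>
    have hpred := hstep (-(k : ℤ) - 1)
    rw [sub_add_cancel] at hpred
    exact hpred.symm.trans ih

theorem ae_not_bddBelow [IsFiniteMeasure P] (hθ : MeasurePreserving θ P P) {R : Ω → Set ℤ}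
    (hR : ∀ k, Measurable fun ω => k ∈ R ω) (hshift : ∀ ω k, k ∈ R (θ ω) ↔ k + 1 ∈ R ω) :
    ∀ᵐ ω ∂P, (R ω).Nonempty → ¬BddBelow (R ω) := by
  -- the events `{min R = k}` are disjoint and, being shifts of one another, equally likely
  set least : ℤ → Ω → Prop := fun k ω => IsLeast (R ω) k
  have hmeas : ∀ k, Measurable (least k) := fun k =>
    show Measurable fun ω => k ∈ R ω ∧ ∀ j, j ∈ R ω → k ≤ j from
      (hR k).and (.forall fun j => (hR j).imp measurable_const)
  have hleast_shift : ∀ k ω, least k (θ ω) = least (k + 1) ω := fun k ω => propext <| by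
    simp only [least, IsLeast, lowerBounds, Set.mem_ofPred_eq, hshift]
    refine ⟨fun ⟨hk, hlow⟩ => ⟨hk, fun j hj => ?_⟩, fun ⟨hk, hlow⟩ => ⟨hk, fun j hj => ?_⟩⟩
    · have := hlow (a := j - 1) (by rwa [sub_add_cancel])
      omega
    · have := hlow hj
      omega
  have hsame : ∀ k, P {ω | least k ω} = P {ω | least 0 ω} := fun k => by
    simpa only [Set.preimage_singleton_true] using
      (identDistrib_of_shift hθ hmeas hleast_shift k).measure_mem_eq (measurableSet_singleton True)
  have hzero : P {ω | least 0 ω} = 0 := by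
    by_contra hne
    have hsum := tsum_measure_le_measure_univ (μ := P) (s := fun k : ℤ => {ω | least k ω})
      (fun k => (hmeas k).setOf.nullMeasurableSet)
      (fun k l hkl => Disjoint.aedisjoint (Set.disjoint_left.2 fun _ hk hl => hkl (hk.unique hl)))
    simp only [hsame, ENNReal.tsum_const_eq_top_of_ne_zero hne, top_le_iff] at hsum
    exact measure_ne_top P _ hsum
  have hnone : ∀ᵐ ω ∂P, ∀ k, ¬least k ω :=
    ae_all_iff.2 fun k => measure_eq_zero_iff_ae_notMem.1 ((hsame k).trans hzero)
  filter_upwards [hnone] with ω hω hne hbdd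
  obtain ⟨k, hk⟩ := hbdd.exists_isLeast_of_nonempty hne
  exact hω k hk

end MeasurePreserving

end MeasureTheory

namespace DoeblinGraph

open Filter MeasureTheory

section Trajectory

variable {S Ξ Ω : Type*} (h : S → Ξ → S) (ξ : ℤ → Ω → Ξ) (ω : Ω)

/-- `F^{(c,x)}_t` in the paper's notation, with the junk value `x` for `t < c`. -/
def trajectory (x : S) (c t : ℤ) : S := Fpath h ξ ω c x (t - c).toNat

variable {h ξ ω} {x x' : S} {c c' s v w t : ℤ}

@[simp]
lemma trajectory_self : trajectory h ξ ω x c c = x := by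
  simp [trajectory, Fpath]

lemma trajectory_add_natCast (n : ℕ) : trajectory h ξ ω x c (c + n) = Fpath h ξ ω c x n := by
  simp [trajectory]

lemma trajectory_succ (hct : c ≤ t) :
    trajectory h ξ ω x c (t + 1) = h (trajectory h ξ ω x c t) (ξ t ω) := by
  obtain ⟨n, rfl⟩ := Int.exists_add_of_le hct
  rw [add_assoc, ← Nat.cast_one, ← Nat.cast_add, trajectory_add_natCast, trajectory_add_natCast]
  rfl

lemma trajectory_eq_of_eq_at (hc : c ≤ s) (hc' : c' ≤ s)
    (heq : trajectory h ξ ω x c s = trajectory h ξ ω x' c' s) (hst : s ≤ t) :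
    trajectory h ξ ω x c t = trajectory h ξ ω x' c' t := by
  induction t, hst using Int.leInduction with
  | base => exact heq
  | succ t hst ih => rw [trajectory_succ (hc.trans hst), trajectory_succ (hc'.trans hst), ih]

lemma eventually_trajectory_eq_of_merge (hm : Merge h ξ ω (c, x) (c', x')) :
    ∀ᶠ t in atTop, trajectory h ξ ω x c t = trajectory h ξ ω x' c' t := by
  obtain ⟨k, l, hkl, heq⟩ := hm
  have hl : c + k = c' + l := hkl
  refine eventually_atTop.2 ⟨c + k, fun t ht => trajectory_eq_of_eq_at (by omega) (by omega) ?_ ht⟩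
  rw [trajectory_add_natCast, hl, trajectory_add_natCast]
  exact heq

variable (h ξ ω) in
def Visits (x : S) (s t : ℤ) : Prop := s ≤ t ∧ trajectory h ξ ω x s t = x

lemma Visits.refl : Visits h ξ ω x s s := ⟨le_rfl, trajectory_self⟩

lemma Visits.trajectory_eq (hv : Visits h ξ ω x s v) (hvt : v ≤ t) :
    trajectory h ξ ω x s t = trajectory h ξ ω x v t :=
  trajectory_eq_of_eq_at hv.1 le_rfl (hv.2.trans trajectory_self.symm) hvt

lemma Visits.trans (hv : Visits h ξ ω x s v) (hw : Visits h ξ ω x v w) : Visits h ξ ω x s w :=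
  ⟨hv.1.trans hw.1, (hv.trajectory_eq hw.1).trans hw.2⟩

lemma visits_of_fpath_eq {n : ℕ} (hn : Fpath h ξ ω s x n = x) : Visits h ξ ω x s (s + n) :=
  ⟨by omega, (trajectory_add_natCast n).trans hn⟩

end Trajectory

section Renewal

variable {S Ξ Ω : Type*} {h : S → Ξ → S} {ξ : ℤ → Ω → Ξ} {ω : Ω} {x : S} {s v w t : ℤ}

lemma not_bddAbove_visits (hret : ∀ s, ∃ t, s < t ∧ Visits h ξ ω x s t) :
    ¬BddAbove {t | Visits h ξ ω x s t} :=
  not_bddAbove_of_forall_exists_gt ⟨s, Visits.refl⟩ fun v hv =>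
    let ⟨w, hvw, hw⟩ := hret v
    ⟨w, hv.trans hw, hvw⟩

variable (h ξ ω) in
/-- The times at which the backward limit `β_t = lim_{s → -∞} F^{(s,x)}_t` sits at `x`. -/
def IsRenewalTime (x : S) (v : ℤ) : Prop := ∀ᶠ s in atBot, Visits h ξ ω x s v

lemma IsRenewalTime.visits (hv : IsRenewalTime h ξ ω x v) (hw : IsRenewalTime h ξ ω x w)
    (hvw : v ≤ w) : Visits h ξ ω x v w :=
  let ⟨_, hsv, hsw⟩ := (hv.and hw).exists
  ⟨hvw, (hsv.trajectory_eq hvw).symm.trans hsw.2⟩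

lemma IsRenewalTime.of_visits (hv : IsRenewalTime h ξ ω x v) (hvw : Visits h ξ ω x v w) :
    IsRenewalTime h ξ ω x w :=
  hv.mono fun _ hs => hs.trans hvw

lemma not_bddAbove_isRenewalTime (hret : ∀ s, ∃ t, s < t ∧ Visits h ξ ω x s t)
    (hv : IsRenewalTime h ξ ω x v) : ¬BddAbove {v | IsRenewalTime h ξ ω x v} :=
  not_bddAbove_of_forall_exists_gt ⟨v, hv⟩ fun v hv =>
    let ⟨w, hvw, hw⟩ := hret v
    ⟨w, hv.of_visits hw, hvw⟩

theorem exists_isRenewalTime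
    (hmerge : ∀ c c', ∀ᶠ t in atTop, trajectory h ξ ω x c t = trajectory h ξ ω x c' t)
    (hret : ∀ s, ∃ t, s < t ∧ Visits h ξ ω x s t)
    (hbnd : ∀ᶠ u in atBot, ∃ c, u < c ∧ c ≤ 0 ∧ Visits h ξ ω x u c) :
    ∃ v, IsRenewalTime h ξ ω x v := by
  obtain ⟨a, ha⟩ := eventually_atBot.1 hbnd
  -- the return after the last visit in `[s, a]` lies in the finite window `(a, 0]`
  have hwindow : ∀ s ≤ a, ∃ c ∈ Set.Ioc a 0, Visits h ξ ω x s c := by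
    intro s hs
    obtain ⟨u, ⟨hsu, hua⟩, hu_max⟩ :=
      BddAbove.exists_isGreatest_of_nonempty (S := {u | Visits h ξ ω x s u ∧ u ≤ a})
        ⟨a, fun _ hu => hu.2⟩ ⟨s, Visits.refl, hs⟩
    obtain ⟨c, huc, hc0, hc⟩ := ha u hua
    exact ⟨c, ⟨lt_of_not_ge fun hca => (hu_max ⟨hsu.trans hc, hca⟩).not_gt huc, hc0⟩, hsu.trans hc⟩
  obtain ⟨T, hT⟩ :=
    eventually_atTop.1 <| (Set.finite_Ioc a 0).eventually_all.2 fun c _ => hmerge c 0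
  obtain ⟨t, ⟨ht0, hxt⟩, hTt⟩ := not_bddAbove_iff.1 (not_bddAbove_visits hret (s := 0)) T
  refine ⟨t, eventually_atBot.2 ⟨a, fun s hs => ?_⟩⟩
  obtain ⟨c, hc, hsc⟩ := hwindow s hs
  refine ⟨hsc.1.trans (hc.2.trans ht0), ?_⟩
  rw [hsc.trajectory_eq (hc.2.trans ht0), hT t hTt.le c hc, hxt]

end Renewal

section LimitPath

variable {S Ξ Ω : Type*} {h : S → Ξ → S} {ξ : ℤ → Ω → Ξ} {ω : Ω} {x y : S} {v t : ℤ}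

variable (h ξ ω) in
/-- The path `β_t = lim_{s → -∞} F^{(s,x)}_t`, read off from any renewal time `v ≤ t`
(with the junk value `x` when there is none). -/
noncomputable def limitPath (x : S) (t : ℤ) : S :=
  if H : ∃ v ≤ t, IsRenewalTime h ξ ω x v then trajectory h ξ ω x H.choose t else x

lemma limitPath_eq_trajectory (hv : IsRenewalTime h ξ ω x v) (hvt : v ≤ t) :
    limitPath h ξ ω x t = trajectory h ξ ω x v t := by
  have H : ∃ v ≤ t, IsRenewalTime h ξ ω x v := ⟨v, hvt, hv⟩
  obtain ⟨hut, hu⟩ := H.choose_spec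
  rw [limitPath, dif_pos H]
  rcases le_total H.choose v with huv | hvu
  · exact (hu.visits hv huv).trajectory_eq hvt
  · exact ((hv.visits hu hvu).trajectory_eq hut).symm

lemma limitPath_of_isRenewalTime (hv : IsRenewalTime h ξ ω x v) : limitPath h ξ ω x v = x := by
  rw [limitPath_eq_trajectory hv le_rfl, trajectory_self]

lemma limitPath_succ (hv : IsRenewalTime h ξ ω x v) (hvt : v ≤ t) :
    limitPath h ξ ω x (t + 1) = h (limitPath h ξ ω x t) (ξ t ω) := by
  rw [limitPath_eq_trajectory hv hvt, limitPath_eq_trajectory hv (by omega), trajectory_succ hvt]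

lemma limitPath_eq_iff : limitPath h ξ ω x t = y ↔
    (∃ v ≤ t, IsRenewalTime h ξ ω x v ∧ trajectory h ξ ω x v t = y) ∨
      ((¬∃ v ≤ t, IsRenewalTime h ξ ω x v) ∧ x = y) := by
  by_cases H : ∃ v ≤ t, IsRenewalTime h ξ ω x v
  · simp only [H, not_true_eq_false, false_and, or_false]
    obtain ⟨v, hvt, hv⟩ := H
    refine ⟨fun hy => ⟨v, hvt, hv, (limitPath_eq_trajectory hv hvt).symm.trans hy⟩, ?_⟩
    rintro ⟨w, hwt, hw, hy⟩
    exact (limitPath_eq_trajectory hw hwt).trans hy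
  · have hnone : ¬∃ v ≤ t, IsRenewalTime h ξ ω x v ∧ trajectory h ξ ω x v t = y :=
      fun ⟨v, hvt, hv, _⟩ => H ⟨v, hvt, hv⟩
    rw [limitPath, dif_neg H]
    simp only [hnone, H, not_false_eq_true, true_and, false_or]

theorem limitPath_isPath (hren : ¬BddBelow {v | IsRenewalTime h ξ ω x v}) (t : ℤ) :
    limitPath h ξ ω x (t + 1) = h (limitPath h ξ ω x t) (ξ t ω) :=
  let ⟨_, hv, hvt⟩ := not_bddBelow_iff.1 hren t
  limitPath_succ hv hvt.le

theorem limitPath_birecurrent (hbelow : ¬BddBelow {v | IsRenewalTime h ξ ω x v})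
    (habove : ¬BddAbove {v | IsRenewalTime h ξ ω x v}) (n : ℤ) :
    (∃ t, n ≤ t ∧ limitPath h ξ ω x t = x) ∧ (∃ t, t ≤ n ∧ limitPath h ξ ω x t = x) :=
  let ⟨v, hv, hnv⟩ := not_bddAbove_iff.1 habove n
  let ⟨w, hw, hwn⟩ := not_bddBelow_iff.1 hbelow n
  ⟨⟨v, hnv.le, limitPath_of_isRenewalTime hv⟩, ⟨w, hwn.le, limitPath_of_isRenewalTime hw⟩⟩

theorem eq_limitPath_of_isPath (hren : ¬BddBelow {v | IsRenewalTime h ξ ω x v}) {γ : ℤ → S}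
    (hγ : ∀ t, γ (t + 1) = h (γ t) (ξ t ω)) (hrec : ∀ n, ∃ w, w ≤ n ∧ γ w = x) (t : ℤ) :
    γ t = limitPath h ξ ω x t := by
  obtain ⟨v, hv, hvt⟩ := not_bddBelow_iff.1 hren (t + 1)
  obtain ⟨a, ha⟩ := eventually_atBot.1 hv
  obtain ⟨w, hw, hγw⟩ := hrec (min a v)
  have hfollow : ∀ u, w ≤ u → γ u = trajectory h ξ ω x w u := by
    intro u hu
    induction u, hu using Int.leInduction with
    | base => rw [trajectory_self, hγw]
    | succ u hu ih => rw [hγ, ih, trajectory_succ hu]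
  rw [hfollow t (by omega), (ha w (by omega)).trajectory_eq (by omega),
    limitPath_eq_trajectory hv (by omega)]

end LimitPath

section Shift

variable {S Ξ Ω : Type*} {h : S → Ξ → S} {ξ : ℤ → Ω → Ξ} {ω ω' : Ω} {x : S}

lemma fpath_of_shift (hω : ∀ u, ξ u ω' = ξ (u + 1) ω) (c : ℤ) (y : S) (n : ℕ) :
    Fpath h ξ ω' c y n = Fpath h ξ ω (c + 1) y n := by
  induction n with
  | zero => rfl
  | succ n ih => simp only [Fpath, ih, hω, add_right_comm c]

lemma trajectory_of_shift (hω : ∀ u, ξ u ω' = ξ (u + 1) ω) (c t : ℤ) :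
    trajectory h ξ ω' x c t = trajectory h ξ ω x (c + 1) (t + 1) := by
  rw [trajectory, trajectory, fpath_of_shift hω, add_sub_add_right_eq_sub]

lemma visits_of_shift (hω : ∀ u, ξ u ω' = ξ (u + 1) ω) (s t : ℤ) :
    Visits h ξ ω' x s t ↔ Visits h ξ ω x (s + 1) (t + 1) := by
  rw [Visits, Visits, trajectory_of_shift hω, add_le_add_iff_right]

lemma isRenewalTime_of_shift (hω : ∀ u, ξ u ω' = ξ (u + 1) ω) (v : ℤ) :
    IsRenewalTime h ξ ω' x v ↔ IsRenewalTime h ξ ω x (v + 1) := by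
  simp only [IsRenewalTime, visits_of_shift hω]
  conv_rhs => rw [← (OrderIso.addRight (1 : ℤ)).map_atBot, eventually_map]
  rfl

lemma limitPath_of_shift (hω : ∀ u, ξ u ω' = ξ (u + 1) ω) (t : ℤ) :
    limitPath h ξ ω' x t = limitPath h ξ ω x (t + 1) := by
  by_cases H : ∃ v ≤ t, IsRenewalTime h ξ ω' x v
  · obtain ⟨v, hvt, hv⟩ := H
    rw [limitPath_eq_trajectory hv hvt, trajectory_of_shift hω,
      limitPath_eq_trajectory ((isRenewalTime_of_shift hω v).1 hv) (by omega)]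
  · have H' : ¬∃ v ≤ t + 1, IsRenewalTime h ξ ω x v := fun ⟨v, hvt, hv⟩ =>
      H ⟨v - 1, by omega, (isRenewalTime_of_shift hω _).2 (by rwa [sub_add_cancel])⟩
    rw [limitPath, limitPath, dif_neg H, dif_neg H']

end Shift

section Measurability

variable {S Ξ Ω : Type*} [MeasurableSpace Ξ] [MeasurableSpace S] [MeasurableSingletonClass S]
  [Countable S] {m : MeasurableSpace Ω} {h : S → Ξ → S} {ξ : ℤ → Ω → Ξ} {x : S} {c v t : ℤ}

lemma measurable_fpath (hh : ∀ x, Measurable (h x)) (hξ : ∀ s < t, Measurable (ξ s))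
    {n : ℕ} (hcn : c + n ≤ t) (y : S) : Measurable fun ω => Fpath h ξ ω c y n := by
  induction n with
  | zero => exact measurable_const
  | succ n ih =>
    exact (measurable_from_prod_countable_right (f := Function.uncurry h) hh).comp
      ((ih (by omega)).prodMk (hξ (c + n) (by omega)))

lemma measurable_trajectory (hh : ∀ x, Measurable (h x)) (hξ : ∀ s < t, Measurable (ξ s))
    (hct : c ≤ t) (hvt : v ≤ t) : Measurable fun ω => trajectory h ξ ω x c v :=
  measurable_fpath hh hξ (by omega) x

lemma measurable_visits (hh : ∀ x, Measurable (h x)) (hξ : ∀ s < t, Measurable (ξ s))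
    (hvt : v ≤ t) (s : ℤ) : Measurable fun ω => Visits h ξ ω x s v :=
  measurable_const_and fun hsv => (measurable_trajectory hh hξ (hsv.trans hvt) hvt).eq_const x

lemma measurable_isRenewalTime (hh : ∀ x, Measurable (h x)) (hξ : ∀ s < t, Measurable (ξ s))
    (hvt : v ≤ t) : Measurable fun ω => IsRenewalTime h ξ ω x v := by
  simp only [IsRenewalTime, eventually_atBot]
  exact .exists fun a => .forall fun s => measurable_const.imp (measurable_visits hh hξ hvt s)

theorem measurable_limitPath (hh : ∀ x, Measurable (h x)) (hξ : ∀ s < t, Measurable (ξ s)) :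
    Measurable fun ω => limitPath h ξ ω x t := by
  refine measurable_to_countable' fun y => measurableSet_setOfPred.2 ?_
  simp only [Set.mem_singleton_iff, limitPath_eq_iff]
  refine .or (.exists fun v => measurable_const_and fun hvt =>
    (measurable_isRenewalTime hh hξ hvt).and ((measurable_trajectory hh hξ hvt le_rfl).eq_const y))
    ((Measurable.exists fun v => measurable_const_and fun hvt =>
      measurable_isRenewalTime hh hξ hvt).not.and measurable_const)

end Measurability

section ReturnTime

variable {S Ξ Ω : Type*} {h : S → Ξ → S} {ξ : ℤ → Ω → Ξ} {ω ω' : Ω} {x y : S} {t : ℤ}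

lemma retTime_lt_iff {c : ℝ≥0∞} : retTime h ξ t x y ω < c ↔
    ∃ r : ℕ, (r : ℝ≥0∞) < c ∧ 0 < r ∧ Fpath h ξ ω t x r = y := by
  simp only [retTime, sInf_lt_iff, Set.mem_ofPred_eq]
  constructor
  · rintro ⟨_, ⟨r, rfl, hr⟩, hrc⟩
    exact ⟨r, hrc, hr⟩
  · rintro ⟨r, hrc, hr⟩
    exact ⟨r, ⟨r, rfl, hr⟩, hrc⟩

lemma retTime_of_shift (hω : ∀ u, ξ u ω' = ξ (u + 1) ω) :
    retTime h ξ t x y ω' = retTime h ξ (t + 1) x y ω := by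
  simp only [retTime, fpath_of_shift hω]

lemma measurable_retTime [MeasurableSpace Ω] [MeasurableSpace Ξ] [MeasurableSpace S]
    [MeasurableSingletonClass S] [Countable S] (hh : ∀ x, Measurable (h x))
    (hξ : ∀ s, Measurable (ξ s)) : Measurable fun ω => retTime h ξ t x y ω := by
  refine measurable_of_Iio fun c => measurableSet_setOfPred.2 ?_
  simp only [Set.mem_Iio, retTime_lt_iff]
  exact .exists fun r => measurable_const.and <| measurable_const.and <|
    (measurable_fpath hh (fun s _ => hξ s) le_rfl x).eq_const y

end ReturnTime

section Probability

variable {S Ξ Ω : Type*} [MeasurableSpace Ω] [MeasurableSpace Ξ] [MeasurableSpace S]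
  [MeasurableSingletonClass S] [Countable S] {P : Measure Ω} {θ : Ω → Ω} {h : S → Ξ → S}
  {ξ : ℤ → Ω → Ξ} {x : S}

lemma identDistrib_retTime (hθ : MeasurePreserving θ P P)
    (hcov : ∀ t ω, ξ t (θ ω) = ξ (t + 1) ω) (hh : ∀ x, Measurable (h x))
    (hξ : ∀ s, Measurable (ξ s)) (t : ℤ) :
    IdentDistrib (fun ω => retTime h ξ t x x ω) (fun ω => retTime h ξ 0 x x ω) P P :=
  hθ.identDistrib_of_shift (F := fun t ω => retTime h ξ t x x ω)
    (fun _ => measurable_retTime hh hξ) (fun _ ω => retTime_of_shift (hcov · ω)) t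

theorem ae_forall_exists_visits (hθ : MeasurePreserving θ P P)
    (hcov : ∀ t ω, ξ t (θ ω) = ξ (t + 1) ω) (hh : ∀ x, Measurable (h x))
    (hξ : ∀ s, Measurable (ξ s)) (hpos : ∫⁻ ω, retTime h ξ 0 x x ω ∂P ≠ ⊤) :
    ∀ᵐ ω ∂P, ∀ s, ∃ t, s < t ∧ Visits h ξ ω x s t := by
  refine ae_all_iff.2 fun s => ?_
  filter_upwards [(identDistrib_retTime hθ hcov hh hξ s).symm.ae_snd measurableSet_Iio
    (ae_lt_top (measurable_retTime hh hξ) hpos)] with ω hω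
  obtain ⟨r, -, hr, hfp⟩ := retTime_lt_iff.1 hω
  exact ⟨s + r, by omega, visits_of_fpath_eq hfp⟩

theorem ae_eventually_visits_nonpos (hθ : MeasurePreserving θ P P)
    (hcov : ∀ t ω, ξ t (θ ω) = ξ (t + 1) ω) (hh : ∀ x, Measurable (h x))
    (hξ : ∀ s, Measurable (ξ s)) (hpos : ∫⁻ ω, retTime h ξ 0 x x ω ∂P ≠ ⊤) :
    ∀ᵐ ω ∂P, ∀ᶠ u in atBot, ∃ c, u < c ∧ c ≤ 0 ∧ Visits h ξ ω x u c := by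
  -- Borel–Cantelli, with `∑ₙ P(τ ≥ n + 1) ≤ E τ < ∞` for the return time `τ`
  have hsum : ∑' n : ℕ, P {ω | (n + 1 : ℝ≥0∞) ≤ retTime h ξ (-n) x x ω} ≠ ⊤ := by
    refine ne_top_of_le_ne_top hpos (le_of_eq_of_le (tsum_congr fun n => ?_)
      (tsum_measure_natCast_add_one_le_le_lintegral (measurable_retTime hh hξ)))
    exact (identDistrib_retTime hθ hcov hh hξ (-n)).measure_mem_eq measurableSet_Ici
  filter_upwards [ae_eventually_notMem hsum] with ω hω
  obtain ⟨n₀, hn₀⟩ := eventually_atTop.1 hω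
  refine eventually_atBot.2 ⟨-n₀, fun u hu => ?_⟩
  obtain ⟨n, rfl⟩ : ∃ n : ℕ, u = -n := ⟨(-u).toNat, by omega⟩
  obtain ⟨r, hrn, hr, hfp⟩ := retTime_lt_iff.1 (not_le.1 (hn₀ n (by omega)))
  have hrn : r < n + 1 := by exact_mod_cast hrn
  exact ⟨-n + r, by omega, by omega, visits_of_fpath_eq hfp⟩

theorem ae_isRenewalTime_unbounded [IsFiniteMeasure P] (hθ : MeasurePreserving θ P P)
    (hcov : ∀ t ω, ξ t (θ ω) = ξ (t + 1) ω) (hh : ∀ x, Measurable (h x))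
    (hξ : ∀ s, Measurable (ξ s)) (hconn : ∀ᵐ ω ∂P, ∀ u v : ℤ × S, Merge h ξ ω u v)
    (hpos : ∫⁻ ω, retTime h ξ 0 x x ω ∂P ≠ ⊤) :
    ∀ᵐ ω ∂P, ¬BddBelow {v | IsRenewalTime h ξ ω x v} ∧ ¬BddAbove {v | IsRenewalTime h ξ ω x v} := by
  have hbelow := hθ.ae_not_bddBelow (R := fun ω => {v | IsRenewalTime h ξ ω x v})
    (fun _ => measurable_isRenewalTime hh (fun s _ => hξ s) le_rfl)
    (fun ω _ => isRenewalTime_of_shift (hcov · ω) _)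
  filter_upwards [hconn, ae_forall_exists_visits hθ hcov hh hξ hpos,
    ae_eventually_visits_nonpos hθ hcov hh hξ hpos, hbelow] with ω hmerge hret hbnd hbelow
  obtain ⟨v, hv⟩ := exists_isRenewalTime
    (fun c c' => eventually_trajectory_eq_of_merge (hmerge _ _)) hret hbnd
  exact ⟨hbelow ⟨v, hv⟩, not_bddAbove_isRenewalTime hret hv⟩

theorem ae_limitPath_eq_limitPath [IsFiniteMeasure P] (hθ : MeasurePreserving θ P P)
    (hcov : ∀ t ω, ξ t (θ ω) = ξ (t + 1) ω) (hh : ∀ x, Measurable (h x))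
    (hξ : ∀ s, Measurable (ξ s)) (hconn : ∀ᵐ ω ∂P, ∀ u v : ℤ × S, Merge h ξ ω u v) {y : S}
    (hx : ∫⁻ ω, retTime h ξ 0 x x ω ∂P ≠ ⊤) (hy : ∫⁻ ω, retTime h ξ 0 y y ω ∂P ≠ ⊤) :
    ∀ᵐ ω ∂P, ∀ t, limitPath h ξ ω x t = limitPath h ξ ω y t := by
  let R ω := {k : ℤ | ∀ t, k ≤ t → limitPath h ξ ω x t = limitPath h ξ ω y t}
  have hR : ∀ k, Measurable fun ω => k ∈ R ω := fun k => .forall fun t =>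
    measurable_const.imp ((measurable_limitPath hh (fun s _ => hξ s)).eq
      (measurable_limitPath hh (fun s _ => hξ s)))
  have hshift : ∀ ω k, k ∈ R (θ ω) ↔ k + 1 ∈ R ω := fun ω k => by
    simp only [R, Set.mem_ofPred_eq, limitPath_of_shift (hcov · ω)]
    refine ⟨fun H t ht => ?_, fun H t ht => H (t + 1) (by omega)⟩
    simpa using H (t - 1) (by omega)
  filter_upwards [hconn, ae_isRenewalTime_unbounded hθ hcov hh hξ hconn hx,
    ae_isRenewalTime_unbounded hθ hcov hh hξ hconn hy, hθ.ae_not_bddBelow hR hshift]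
    with ω hmerge hxren hyren hRbelow t
  obtain ⟨v, hv, -⟩ := not_bddAbove_iff.1 hxren.2 0
  obtain ⟨w, hw, -⟩ := not_bddAbove_iff.1 hyren.2 0
  have hev : ∀ᶠ t in atTop, limitPath h ξ ω x t = limitPath h ξ ω y t := by
    filter_upwards [eventually_ge_atTop (max v w),
      eventually_trajectory_eq_of_merge (hmerge (v, x) (w, y))] with t ht heq
    rw [limitPath_eq_trajectory hv (le_of_max_le_left ht),
      limitPath_eq_trajectory hw (le_of_max_le_right ht), heq]
  obtain ⟨k, hk, hkt⟩ := not_bddBelow_iff.1 (hRbelow (eventually_atTop.1 hev)) t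
  exact hk t hkt.le

end Probability

end DoeblinGraph

open DoeblinGraph

/-- If the Doeblin graph is a.s. connected (an EFT) and `x⋆` is positive
recurrent, then there is a state path `β`, unique up to null sets, that is
bi-recurrent for `x⋆`; it is stationary, `β t` is measurable with respect to
`σ(ξ_s : s < t)`, and `β` is bi-recurrent for every positive recurrent state. -/
theorem unique_birecurrent_path_in_EFT
    {Ω S Ξ : Type*} [MeasurableSpace Ω] [MeasurableSpace Ξ] [MeasurableSpace S]
    [MeasurableSingletonClass S] [Countable S]
    (P : Measure Ω) [IsProbabilityMeasure P]
    (h : S → Ξ → S) (hhmeas : ∀ x, Measurable (h x))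
    (ξ : ℤ → Ω → Ξ) (hξmeas : ∀ t, Measurable (ξ t))
    (θ : Ω → Ω) (hergo : Ergodic θ P)
    (hcov : ∀ (t : ℤ) (ω : Ω), ξ t (θ ω) = ξ (t + 1) ω)
    (hconn : ∀ᵐ ω ∂P, ∀ u v : ℤ × S, Merge h ξ ω u v)
    (xstar : S)
    (hposrec : ∫⁻ ω, retTime h ξ 0 xstar xstar ω ∂P < ⊤) :
    ∃ β : ℤ → Ω → S,
      (∀ t : ℤ, @Measurable Ω S
        (MeasurableSpace.comap (fun ω (s : {s : ℤ // s < t}) => ξ s ω) inferInstance) _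
        (β t))
      ∧ (∀ᵐ ω ∂P, ∀ t : ℤ, β (t + 1) ω = h (β t ω) (ξ t ω))
      ∧ (∀ᵐ ω ∂P, ∀ n : ℤ,
          (∃ t, n ≤ t ∧ β t ω = xstar) ∧ (∃ t, t ≤ n ∧ β t ω = xstar))
      ∧ (Measure.map (fun ω (t : ℤ) => β (t + 1) ω) P
          = Measure.map (fun ω (t : ℤ) => β t ω) P)
      ∧ (∀ γ : ℤ → Ω → S,
          (∀ᵐ ω ∂P, ∀ t : ℤ, γ (t + 1) ω = h (γ t ω) (ξ t ω)) →
          (∀ᵐ ω ∂P, ∀ n : ℤ,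
            (∃ t, n ≤ t ∧ γ t ω = xstar) ∧ (∃ t, t ≤ n ∧ γ t ω = xstar)) →
          ∀ᵐ ω ∂P, ∀ t : ℤ, γ t ω = β t ω)
      ∧ (∀ x : S, (∫⁻ ω, retTime h ξ 0 x x ω ∂P < ⊤) →
          ∀ᵐ ω ∂P, ∀ n : ℤ,
            (∃ t, n ≤ t ∧ β t ω = x) ∧ (∃ t, t ≤ n ∧ β t ω = x)) := by
  have hθ := hergo.toMeasurePreserving
  have hξ_past : ∀ t, ∀ s < t, Measurable[MeasurableSpace.comap
      (fun ω (s : {s : ℤ // s < t}) => ξ s ω) inferInstance] (ξ s) := fun t s hs =>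
    (measurable_pi_apply (⟨s, hs⟩ : {s : ℤ // s < t})).comp
      (comap_measurable fun ω (s : {s : ℤ // s < t}) => ξ s ω)
  have hren := ae_isRenewalTime_unbounded hθ hcov hhmeas hξmeas hconn hposrec.ne
  refine ⟨fun t ω => limitPath h ξ ω xstar t, fun t => measurable_limitPath hhmeas (hξ_past t),
    ?_, ?_, ?_, ?_, ?_⟩
  · filter_upwards [hren] with ω hω using limitPath_isPath hω.1
  · filter_upwards [hren] with ω hω using limitPath_birecurrent hω.1 hω.2
  · exact hθ.map_shift_eq (fun t => measurable_limitPath hhmeas fun s _ => hξmeas s)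
      fun t ω => limitPath_of_shift (hcov · ω) t
  · intro γ hγ hγrec
    filter_upwards [hren, hγ, hγrec] with ω hω hγ hγrec using
      eq_limitPath_of_isPath hω.1 hγ fun n => (hγrec n).2
  · intro x hx
    filter_upwards [ae_limitPath_eq_limitPath hθ hcov hhmeas hξmeas hconn hposrec.ne hx.ne,
      ae_isRenewalTime_unbounded hθ hcov hhmeas hξmeas hconn hx.ne] with ω heq hω n
    simpa only [heq] using limitPath_birecurrent hω.1 hω.2 n
end

section
/- Suppose the Doeblin graph $\mathbb{G}$ is a.s. connected, has fully independent transitions, $x^*$ is positive recurrent, and $p_{x^*,x^*}>0$. Then $\mathbb{P}(\mathbf{B}_0 = \{x^*\}) > 0$, i.e., the singleton $\{x^*\}$ is a possible configuration of the time-zero slice of the bridge graph. -/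
/-!
Positive recurrence makes `∑ₙ P(no return to x⋆ within n steps) = E[return time]` finite, so for
`N` large the probability that some path started at `(-n, x⋆)`, `n ≥ N`, has not come back to `x⋆`
by time `0` is below `1`. If in addition `x⋆` stays put at every time in `(-N, 0)`, then every path
started at `(-n, x⋆)` is at `x⋆` at time `0`, i.e. `B₀ = {x⋆}`. Staying put has probability
`p_{x⋆,x⋆}^(N-1) > 0` and is independent of the return event: up to its first return, a path
started at `x⋆` at a time `≤ -N` only uses transitions out of states other than `x⋆` and the one
transition out of `x⋆` at its starting time, and all transitions are independent.
-/

open MeasureTheory ProbabilityTheory ENNReal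
open scoped Classical

/-- Time-`t` slice of the bridge graph for `x⋆`. -/
def Bslice {S Ξ Ω : Type*} (h : S → Ξ → S) (ξ : ℤ → Ω → Ξ) (xstar : S) (t : ℤ) (ω : Ω) :
    Set S :=
  {y : S | ∃ n : ℕ, Fpath h ξ ω (t - n) xstar n = y}

theorem ProbabilityTheory.iIndepFun.map_shift_eq {Ω ι β : Type*} [MeasurableSpace Ω]
    [MeasurableSpace β] [AddGroup ι] {P : Measure Ω} {X : ι → Ω → β}
    (hX : ∀ i, Measurable (X i)) (hindep : iIndepFun X P)
    (hident : ∀ i, P.map (X i) = P.map (X 0)) (s : ι) :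
    P.map (fun ω i => X (s + i) ω) = P.map (fun ω i => X i ω) := by
  rw [(hindep.precomp (add_right_injective s)).map_fun_eq_infinitePi_map (fun i => hX _),
    hindep.map_fun_eq_infinitePi_map hX]
  simp only [hident]

theorem ENNReal.exists_tsum_add_lt_one {q : ℕ → ℝ≥0∞} (hq : ∑' n, q n ≠ ∞) :
    ∃ N, ∑' k, q (k + N) < 1 :=
  ((ENNReal.tendsto_sum_nat_add q hq).eventually_lt_const zero_lt_one).exists

theorem ProbabilityTheory.iIndepFun.uncurry_comp {Ω ι κ β γ : Type*} [MeasurableSpace Ω]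
    [MeasurableSpace β] [MeasurableSpace γ] {P : Measure Ω} {X : ι → Ω → β}
    (hX : ∀ i, Measurable (X i)) (hindep : iIndepFun X P) {g : κ → β → γ}
    (hg : ∀ j, Measurable (g j)) (hfull : ∀ i, iIndepFun (fun j ω => g j (X i ω)) P) :
    iIndepFun (fun (p : ι × κ) ω => g p.2 (X p.1 ω)) P :=
  iIndepFun_uncurry' (X := fun i j ω => g j (X i ω)) (fun i j => (hg j).comp (hX i))
    (hindep.comp (fun _ b j => g j b) fun _ => measurable_pi_lambda _ hg) hfull

section Paths

variable {Ω S Ξ : Type*} (h : S → Ξ → S) (ξ : ℤ → Ω → Ξ) (ω : Ω)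

def ReturnsWithin (s : ℤ) (x : S) (n : ℕ) : Prop :=
  ∃ r : ℕ, 0 < r ∧ r ≤ n ∧ Fpath h ξ ω s x r = x

noncomputable def absorbAt (x : S) (y : S) (e : Ξ) : S :=
  if y = x then x else h y e

theorem Fpath_add (t : ℤ) (x : S) (a : ℕ) :
    ∀ b, Fpath h ξ ω t x (a + b) = Fpath h ξ ω (t + a) (Fpath h ξ ω t x a) b
  | 0 => rfl
  | b + 1 => by
    rw [← Nat.add_assoc, Fpath, Fpath, Fpath_add t x a b, Nat.cast_add, add_assoc]

theorem Fpath_succ' (t : ℤ) (x : S) (n : ℕ) :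
    Fpath h ξ ω t x (n + 1) = Fpath h ξ ω (t + 1) (h x (ξ t ω)) n := by
  rw [Nat.add_comm, Fpath_add]
  simp [Fpath]

theorem Fpath_absorbAt (t : ℤ) (x y : S) :
    ∀ n, Fpath (absorbAt h x) ξ ω t y n =
      if ∃ r ≤ n, Fpath h ξ ω t y r = x then x else Fpath h ξ ω t y n
  | 0 => by simp [Fpath]
  | n + 1 => by
    have hsucc : (∃ r ≤ n + 1, Fpath h ξ ω t y r = x) ↔
        (∃ r ≤ n, Fpath h ξ ω t y r = x) ∨ Fpath h ξ ω t y (n + 1) = x := by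
      simp only [Nat.le_succ_iff_eq_or_le]
      grind
    simp only [Fpath, Fpath_absorbAt t x y n]
    by_cases hn : ∃ r ≤ n, Fpath h ξ ω t y r = x
    · rw [if_pos hn, if_pos (hsucc.2 (.inl hn))]
      exact if_pos rfl
    · have hne : Fpath h ξ ω t y n ≠ x := fun he => hn ⟨n, le_rfl, he⟩
      rw [if_neg hn, absorbAt, if_neg hne]
      by_cases he : Fpath h ξ ω t y (n + 1) = x
      · rw [if_pos (hsucc.2 (.inr he))]
        exact he
      · rw [if_neg (hsucc.not.2 (not_or.2 ⟨hn, he⟩))]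

theorem returnsWithin_succ_iff (s : ℤ) (x : S) (n : ℕ) :
    ReturnsWithin h ξ ω s x (n + 1) ↔
      Fpath (absorbAt h x) ξ ω (s + 1) (h x (ξ s ω)) n = x := by
  rw [Fpath_absorbAt]
  constructor
  · rintro ⟨_ | r, hr0, hr, hx⟩
    · exact absurd hr0 (lt_irrefl 0)
    · rw [if_pos ⟨r, by omega, by rwa [← Fpath_succ']⟩]
  · intro hx
    split_ifs at hx with hr
    · obtain ⟨r, hrn, hrx⟩ := hr
      exact ⟨r + 1, r.succ_pos, by omega, by rwa [Fpath_succ']⟩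
    · exact ⟨n + 1, n.succ_pos, le_rfl, by rwa [Fpath_succ']⟩

theorem Fpath_eq_Fpath_shift (s : ℤ) (x : S) :
    ∀ n, Fpath h ξ ω s x n = Fpath h (fun t (e : ℤ → Ξ) => e t) (fun t => ξ (s + t) ω) 0 x n
  | 0 => rfl
  | n + 1 => by simp only [Fpath, Fpath_eq_Fpath_shift s x n, zero_add]

theorem tsum_indicator_not_returnsWithin_le_retTime (t : ℤ) (x : S) :
    ∑' n, {ω | ¬ReturnsWithin h ξ ω t x n}.indicator 1 ω ≤ retTime h ξ t x x ω := by
  refine le_sInf ?_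
  rintro _ ⟨r, rfl, hr, hrx⟩
  calc ∑' n, {ω | ¬ReturnsWithin h ξ ω t x n}.indicator (1 : Ω → ℝ≥0∞) ω
      = ∑ n ∈ Finset.range r, {ω | ¬ReturnsWithin h ξ ω t x n}.indicator 1 ω :=
        tsum_eq_sum fun n hn => Set.indicator_of_notMem
          (fun hnot : ¬ReturnsWithin h ξ ω t x n => hnot ⟨r, hr, by simpa using hn, hrx⟩) _
    _ ≤ ∑ n ∈ Finset.range r, (1 : ℝ≥0∞) :=
        Finset.sum_le_sum fun n _ => Set.indicator_le_self _ _ _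
    _ = r := by simp

variable {h ξ ω}

theorem Fpath_neg_eq_self {x : S} {N : ℕ}
    (hlazy : ∀ t : ℤ, -(N : ℤ) < t → t < 0 → h x (ξ t ω) = x)
    (hret : ∀ n : ℕ, N ≤ n → ReturnsWithin h ξ ω (-n) x n) (n : ℕ) :
    Fpath h ξ ω (-n) x n = x := by
  induction n using Nat.strong_induction_on with
  | _ n ih =>
    rcases Nat.eq_zero_or_pos n with rfl | hn
    · rfl
    obtain ⟨r, hr, hrn, hrx⟩ : ReturnsWithin h ξ ω (-n) x n := by
      by_cases hnN : N ≤ n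
      · exact hret n hnN
      · exact ⟨1, one_pos, hn, by simpa [Fpath] using hlazy (-n) (by omega) (by omega)⟩
    have hsplit := Fpath_add h ξ ω (-n) x r (n - r)
    rw [Nat.add_sub_cancel' hrn, hrx, show -(n : ℤ) + r = -((n - r : ℕ) : ℤ) by omega] at hsplit
    rw [hsplit]
    exact ih _ (by omega)

theorem Bslice_zero_eq_singleton {x : S} {N : ℕ}
    (hlazy : ∀ t : ℤ, -(N : ℤ) < t → t < 0 → h x (ξ t ω) = x)
    (hret : ∀ n : ℕ, N ≤ n → ReturnsWithin h ξ ω (-n) x n) :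
    Bslice h ξ x 0 ω = {x} := by
  ext y
  simp only [Bslice, zero_sub, Fpath_neg_eq_self hlazy hret, Set.mem_ofPred_eq,
    Set.mem_singleton_iff, eq_comm (a := x)]
  exact ⟨fun ⟨_, hy⟩ => hy, fun hy => ⟨0, hy⟩⟩

end Paths

section Measurability

variable {Ω S Ξ : Type*} [MeasurableSpace S] [MeasurableSingletonClass S] [Countable S]
  {h : S → Ξ → S} {ξ : ℤ → Ω → Ξ}

theorem measurable_comp_of_countable {β : Type*} {_ : MeasurableSpace Ω} [MeasurableSpace β]
    {F : Ω → S} (hF : Measurable F) {g : S → Ω → β} (hg : ∀ x, Measurable (g x)) :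
    Measurable fun ω => g (F ω) ω :=
  (measurable_from_prod_countable_left (f := fun p : Ω × S => g p.2 p.1) hg).comp
    (measurable_id.prodMk hF)

theorem measurable_Fpath {_ : MeasurableSpace Ω}
    (htrans : ∀ t y, Measurable fun ω => h y (ξ t ω)) (t : ℤ) {X : Ω → S} (hX : Measurable X) :
    ∀ n, Measurable fun ω => Fpath h ξ ω t (X ω) n
  | 0 => hX
  | n + 1 => measurable_comp_of_countable (measurable_Fpath htrans t hX n) (htrans (t + n))

theorem measurableSet_returnsWithin {_ : MeasurableSpace Ω} {s : ℤ} {x : S}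
    (hstart : Measurable fun ω => h x (ξ s ω))
    (htrans : ∀ t y, y ≠ x → Measurable fun ω => h y (ξ t ω)) :
    ∀ n, MeasurableSet {ω | ReturnsWithin h ξ ω s x n}
  | 0 => by simp [ReturnsWithin]
  | n + 1 => by
    simp_rw [returnsWithin_succ_iff]
    refine measurable_Fpath (fun t y => ?_) (s + 1) hstart n (measurableSet_singleton x)
    by_cases hy : y = x
    · simp [absorbAt, hy]
    · simpa [absorbAt, hy] using htrans t y hy

end Measurability

section Probability

variable {Ω S Ξ : Type*} [MeasurableSpace Ω] [MeasurableSpace Ξ] [MeasurableSpace S]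
  [MeasurableSingletonClass S] {h : S → Ξ → S} {ξ : ℤ → Ω → Ξ} (P : Measure Ω)

theorem measure_lazy_pos (hh : ∀ x, Measurable (h x)) (hξ : ∀ t, Measurable (ξ t))
    (hindep : iIndepFun ξ P) (hident : ∀ t, P.map (ξ t) = P.map (ξ 0)) {x : S}
    (hlazy : 0 < P {ω | h x (ξ 0 ω) = x}) (W : Finset ℤ) :
    0 < P (⋂ t ∈ W, {ω | h x (ξ t ω) = x}) := by
  have hA : MeasurableSet (h x ⁻¹' {x}) := hh x (measurableSet_singleton x)
  have hstat : ∀ t, P {ω | h x (ξ t ω) = x} = P {ω | h x (ξ 0 ω) = x} := fun t => by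
    change P (ξ t ⁻¹' (h x ⁻¹' {x})) = P (ξ 0 ⁻¹' (h x ⁻¹' {x}))
    rw [← Measure.map_apply (hξ t) hA, ← Measure.map_apply (hξ 0) hA, hident]
  change 0 < P (⋂ t ∈ W, ξ t ⁻¹' (h x ⁻¹' {x}))
  rw [hindep.meas_biInter fun t _ => ⟨h x ⁻¹' {x}, hA, rfl⟩]
  exact CanonicallyOrderedAdd.prod_pos.2 fun t _ => hstat t ▸ hlazy

variable [Countable S]

theorem measure_Fpath_mem_eq (hh : ∀ x, Measurable (h x))
    (hξ : ∀ t, Measurable (ξ t)) (hindep : iIndepFun ξ P)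
    (hident : ∀ t, P.map (ξ t) = P.map (ξ 0)) (s : ℤ) (x : S)
    {A : Set (ℕ → S)} (hA : MeasurableSet A) :
    P {ω | (fun n => Fpath h ξ ω s x n) ∈ A} = P {ω | (fun n => Fpath h ξ ω 0 x n) ∈ A} := by
  let path : (ℤ → Ξ) → ℕ → S := fun e n => Fpath h (fun t e => e t) e 0 x n
  have hpath : Measurable path := measurable_pi_lambda _ fun n =>
    measurable_Fpath (ξ := fun t (e : ℤ → Ξ) => e t) (X := fun _ => x)
      (fun t y => (hh y).comp (measurable_pi_apply t)) 0 measurable_const n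
  have hshift : ∀ s, {ω | (fun n => Fpath h ξ ω s x n) ∈ A} =
      (fun ω t => ξ (s + t) ω) ⁻¹' (path ⁻¹' A) := by
    intro s
    ext ω
    simp only [Set.mem_ofPred_eq, Set.mem_preimage, path, ← Fpath_eq_Fpath_shift]
  have hmeas : ∀ s, Measurable fun ω t => ξ (s + t) ω :=
    fun s => measurable_pi_lambda _ fun t => hξ _
  rw [hshift, hshift, ← Measure.map_apply (hmeas s) (hpath hA),
    ← Measure.map_apply (hmeas 0) (hpath hA), hindep.map_shift_eq hξ hident,
    hindep.map_shift_eq hξ hident]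

theorem measure_not_returnsWithin_eq (hh : ∀ x, Measurable (h x))
    (hξ : ∀ t, Measurable (ξ t)) (hindep : iIndepFun ξ P)
    (hident : ∀ t, P.map (ξ t) = P.map (ξ 0)) (s : ℤ) (x : S) (n : ℕ) :
    P {ω | ¬ReturnsWithin h ξ ω s x n} = P {ω | ¬ReturnsWithin h ξ ω 0 x n} :=
  measure_Fpath_mem_eq P hh hξ hindep hident s x
    (A := {p | ¬∃ r, 0 < r ∧ r ≤ n ∧ p r = x}) (by fun_prop : Measurable _).setOf

theorem tsum_measure_not_returnsWithin_le_lintegral (hh : ∀ x, Measurable (h x))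
    (hξ : ∀ t, Measurable (ξ t)) (t : ℤ) (x : S) :
    ∑' n, P {ω | ¬ReturnsWithin h ξ ω t x n} ≤ ∫⁻ ω, retTime h ξ t x x ω ∂P := by
  have hmeas : ∀ n, MeasurableSet {ω | ¬ReturnsWithin h ξ ω t x n} := fun n =>
    (measurableSet_returnsWithin ((hh x).comp (hξ t)) (fun t y _ => (hh y).comp (hξ t)) n).compl
  calc ∑' n, P {ω | ¬ReturnsWithin h ξ ω t x n}
      = ∫⁻ ω, ∑' n, {ω | ¬ReturnsWithin h ξ ω t x n}.indicator 1 ω ∂P := by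
        rw [lintegral_tsum fun n => (measurable_one.indicator (hmeas n)).aemeasurable]
        simp_rw [lintegral_indicator_one (hmeas _)]
    _ ≤ ∫⁻ ω, retTime h ξ t x x ω ∂P :=
        lintegral_mono fun ω => tsum_indicator_not_returnsWithin_le_retTime h ξ ω t x

theorem measure_forall_returnsWithin_pos [IsProbabilityMeasure P] (hh : ∀ x, Measurable (h x))
    (hξ : ∀ t, Measurable (ξ t)) (hindep : iIndepFun ξ P)
    (hident : ∀ t, P.map (ξ t) = P.map (ξ 0)) {x : S} {N : ℕ}
    (hN : ∑' k, P {ω | ¬ReturnsWithin h ξ ω 0 x (k + N)} < 1) :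
    0 < P {ω | ∀ n : ℕ, N ≤ n → ReturnsWithin h ξ ω (-n) x n} := by
  set C := {ω | ∀ n : ℕ, N ≤ n → ReturnsWithin h ξ ω (-n) x n}
  have hCc : Cᶜ ⊆ ⋃ k : ℕ, {ω | ¬ReturnsWithin h ξ ω (-(k + N : ℕ)) x (k + N)} := by
    intro ω hω
    simp only [C, Set.mem_compl_iff, Set.mem_ofPred_eq, not_forall] at hω
    obtain ⟨n, hn, hret⟩ := hω
    exact Set.mem_iUnion.2 ⟨n - N, by rwa [Nat.sub_add_cancel hn]⟩
  have hCc_lt : P Cᶜ < 1 := calc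
    P Cᶜ ≤ ∑' k : ℕ, P {ω | ¬ReturnsWithin h ξ ω (-(k + N : ℕ)) x (k + N)} :=
      (measure_mono hCc).trans (measure_iUnion_le _)
    _ = ∑' k, P {ω | ¬ReturnsWithin h ξ ω 0 x (k + N)} := by
      simp_rw [measure_not_returnsWithin_eq P hh hξ hindep hident _ x]
    _ < 1 := hN
  refine pos_iff_ne_zero.2 fun hC => hCc_lt.not_ge ?_
  calc 1 = P (C ∪ Cᶜ) := by rw [Set.union_compl_self, measure_univ]
    _ ≤ P C + P Cᶜ := measure_union_le _ _
    _ = P Cᶜ := by rw [hC, zero_add]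

theorem measure_returnsWithin_inter_lazy_eq_mul (hh : ∀ x, Measurable (h x))
    (hξ : ∀ t, Measurable (ξ t)) (hindep : iIndepFun ξ P)
    (hfull : ∀ t, iIndepFun (fun (x : S) ω => h x (ξ t ω)) P) (x : S) (N : ℕ) :
    P ({ω | ∀ n : ℕ, N ≤ n → ReturnsWithin h ξ ω (-n) x n} ∩
        ⋂ t ∈ Finset.Ioo (-(N : ℤ)) 0, {ω | h x (ξ t ω) = x}) =
      P {ω | ∀ n : ℕ, N ≤ n → ReturnsWithin h ξ ω (-n) x n} *
        P (⋂ t ∈ Finset.Ioo (-(N : ℤ)) 0, {ω | h x (ξ t ω) = x}) := by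
  let Y : ℤ × S → Ω → S := fun p ω => h p.2 (ξ p.1 ω)
  let T : Set (ℤ × S) := {p | p.1 ∈ Finset.Ioo (-(N : ℤ)) 0 ∧ p.2 = x}
  let σY : ℤ × S → MeasurableSpace Ω := fun p => MeasurableSpace.comap (Y p) inferInstance
  have hY : ∀ p, Measurable (Y p) := fun p => (hh p.2).comp (hξ p.1)
  have hiY : iIndep σY P := (hindep.uncurry_comp hξ hh hfull).iIndep
  have hind : Indep (⨆ p ∈ Tᶜ, σY p) (⨆ p ∈ T, σY p) P :=
    indep_iSup_of_disjoint (m := σY) (fun p => (hY p).comap_le) hiY disjoint_compl_left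
  have hYB : ∀ {B : Set (ℤ × S)} {p}, p ∈ B → Measurable[⨆ p ∈ B, σY p] (Y p) := fun hp =>
    (comap_measurable _).mono (le_iSup₂ (f := fun p _ => σY p) _ hp) le_rfl
  refine (Indep_iff _ _ _).1 hind _ _ ?_ ?_
  · simp only [Set.ofPred_forall]
    refine .iInter fun n => .iInter fun hn => measurableSet_returnsWithin
      (hYB (B := Tᶜ) (p := (-n, x)) fun hT => ?_)
      (fun t y hy => hYB (B := Tᶜ) (p := (t, y)) fun hT => hy hT.2) n
    have := (Finset.mem_Ioo.1 hT.1).1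
    omega
  · exact Finset.measurableSet_biInter _ fun t ht =>
      hYB (show (t, x) ∈ T from ⟨ht, rfl⟩) (measurableSet_singleton x)

end Probability

theorem singleton_configuration_possible_general
    {Ω S Ξ : Type*} [MeasurableSpace Ω] [MeasurableSpace Ξ] [MeasurableSpace S]
    [MeasurableSingletonClass S] [Countable S]
    (P : Measure Ω) [IsProbabilityMeasure P]
    (h : S → Ξ → S) (hhmeas : ∀ x, Measurable (h x))
    (ξ : ℤ → Ω → Ξ) (hξmeas : ∀ t, Measurable (ξ t))
    (hindep : iIndepFun ξ P)
    (hident : ∀ t, Measure.map (ξ t) P = Measure.map (ξ 0) P)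
    (hfullindep : ∀ t : ℤ, iIndepFun
      (fun (x : S) ω => h x (ξ t ω)) P)
    (xstar : S)
    (hposrec : ∫⁻ ω, retTime h ξ 0 xstar xstar ω ∂P < ⊤)
    (hlazy : 0 < P {ω | h xstar (ξ 0 ω) = xstar}) :
    0 < P {ω | Bslice h ξ xstar 0 ω = {xstar}} := by
  obtain ⟨N, hN⟩ := ENNReal.exists_tsum_add_lt_one
    ((tsum_measure_not_returnsWithin_le_lintegral P hhmeas hξmeas 0 xstar).trans_lt hposrec).ne
  have hC := measure_forall_returnsWithin_pos P hhmeas hξmeas hindep hident hN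
  have hD := measure_lazy_pos P hhmeas hξmeas hindep hident hlazy (Finset.Ioo (-(N : ℤ)) 0)
  calc 0 < _ * _ := ENNReal.mul_pos hC.ne' hD.ne'
    _ = _ :=
      (measure_returnsWithin_inter_lazy_eq_mul P hhmeas hξmeas hindep hfullindep xstar N).symm
    _ ≤ _ := measure_mono fun ω ⟨hωC, hωD⟩ => Bslice_zero_eq_singleton
      (fun t ht0 ht1 => Set.mem_iInter₂.1 hωD t (Finset.mem_Ioo.2 ⟨ht0, ht1⟩)) hωC

/-- If the Doeblin graph is a.s. connected, has fully independent transitions,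
`x⋆` is positive recurrent and `p_{x⋆,x⋆} > 0`, then the singleton `{x⋆}` is a
possible configuration of the time-zero slice of the bridge graph. -/
theorem singleton_configuration_possible
    {Ω S Ξ : Type*} [MeasurableSpace Ω] [MeasurableSpace Ξ] [MeasurableSpace S]
    [MeasurableSingletonClass S] [Countable S]
    (P : Measure Ω) [IsProbabilityMeasure P]
    (h : S → Ξ → S) (hhmeas : ∀ x, Measurable (h x))
    (ξ : ℤ → Ω → Ξ) (hξmeas : ∀ t, Measurable (ξ t))
    (hindep : iIndepFun ξ P)
    (hident : ∀ t, Measure.map (ξ t) P = Measure.map (ξ 0) P)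
    (hfullindep : ∀ t : ℤ, iIndepFun
      (fun (x : S) ω => h x (ξ t ω)) P)
    (hconn : ∀ᵐ ω ∂P, ∀ u v : ℤ × S, Merge h ξ ω u v)
    (xstar : S)
    (hposrec : ∫⁻ ω, retTime h ξ 0 xstar xstar ω ∂P < ⊤)
    (hlazy : 0 < P {ω | h xstar (ξ 0 ω) = xstar}) :
    0 < P {ω | Bslice h ξ xstar 0 ω = {xstar}} :=
  singleton_configuration_possible_general P h hhmeas ξ hξmeas hindep hident hfullindep xstar
    hposrec hlazy
end

section
/- Let $\mathbb{G}$ be an a.s. connected Doeblin graph driven by a stationary ergodic sequence, $x^*$ positive recurrent, and $(\beta_t)_{t\in\mathbb{Z}}$ the unique bi-recurrent state path. For any state $y\in S$, let $N^{(0,x^*)}(y;x^*)$ be the number of visits of the path started at $(0,x^*)$ to $y$ before its first return to $x^*$ (counting the initial visit if $y=x^*$). Then $\mathbb{E}[N^{(0,x^*)}(y;x^*)\, 1_{\{\beta_0=x^*\}}] = \mathbb{P}(\beta_0 = y)$, and summing over $y$, $\mathbb{E}[\sigma^{(0,x^*)}(x^*)\, 1_{\{\beta_0=x^*\}}] = 1$.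 In the Markovian case these reduce to the classical cycle formulas $\mathbb{E}[N^{(0,x^*)}(y;x^*)]\,\pi(x^*)=\pi(y)$ and $\mathbb{E}[\sigma^{(0,x^*)}(x^*)]\,\pi(x^*)=1$. -/
/-!
Mass transport on `ℤ`: every time `t` with `β t = y` sends unit mass to the last time `s ≤ t`
with `β s = x⋆`. Along `β`, a time `s` with `β s = x⋆` receives the number of visits to `y` of
the excursion of the path started at `(s, x⋆)`, while time `0` sends `1_{β 0 = y}`. Stationarity
equates the expected mass received and sent at `0`, which is the first formula; summing over `y`
gives the second.

In the i.i.d. case `{β 0 = x⋆}` coincides a.s. with the event that `(0, x⋆)` is reached from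
`(-n, x⋆)` for infinitely many `n`, which depends only on the driving variables at negative
times, whereas the excursion from `(0, x⋆)` depends only on those at nonnegative times. One
inclusion is the bi-recurrence of `β`. For the other, Borel–Cantelli shows that a.s. each
`(t, x⋆)` is the first return of only finitely many `(t - m, x⋆)`, so a Kőnig argument yields an
infinite ancestral line through `(0, x⋆)`: a bi-recurrent path, hence `β` by uniqueness.
Independence of past and future then factorises both expectations.
-/

open MeasureTheory ProbabilityTheory ENNReal
open scoped Classical

/-- Number of visits of the path started at `(0,x⋆)` to `y` strictly before its
first return to `x⋆` (counting the initial visit when `y = x⋆`). -/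
noncomputable def Nvisits {S Ξ Ω : Type*} (h : S → Ξ → S) (ξ : ℤ → Ω → Ξ)
    (xstar y : S) (ω : Ω) : ℕ∞ :=
  {n : ℕ | (n : ℝ≥0∞) < retTime h ξ 0 xstar xstar ω ∧ Fpath h ξ ω 0 xstar n = y}.encard


section

variable {Ω S Ξ : Type*}

section Paths

variable (h : S → Ξ → S) (ξ : ℤ → Ω → Ξ)

def IsStatePath (ω : Ω) (c : ℤ → S) : Prop :=
  ∀ t, c (t + 1) = h (c t) (ξ t ω)

def IsBirecurrent (x : S) (c : ℤ → S) : Prop :=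
  ∀ n : ℤ, (∃ t, n ≤ t ∧ c t = x) ∧ (∃ t, t ≤ n ∧ c t = x)

lemma fpath_add (ω : Ω) (t : ℤ) (x : S) (k j : ℕ) :
    Fpath h ξ ω t x (k + j) = Fpath h ξ ω (t + k) (Fpath h ξ ω t x k) j := by
  induction j with
  | zero => rfl
  | succ j ih =>
    rw [← add_assoc, Fpath, Fpath, ih]
    congr 2
    push_cast
    ring

lemma fpath_toNat_sub (ω : Ω) (x : S) {s r u : ℤ} (hsr : s ≤ r) (hru : r ≤ u) :
    Fpath h ξ ω s x (u - s).toNat =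
      Fpath h ξ ω r (Fpath h ξ ω s x (r - s).toNat) (u - r).toNat := by
  rw [show (u - s).toNat = (r - s).toNat + (u - r).toNat by omega, fpath_add,
    show s + ((r - s).toNat : ℤ) = r by omega]

lemma IsStatePath.eq_fpath {ω : Ω} {c : ℤ → S} (hc : IsStatePath h ξ ω c) (t : ℤ) (n : ℕ) :
    c (t + n) = Fpath h ξ ω t (c t) n := by
  induction n with
  | zero => simp [Fpath]
  | succ n ih =>
    rw [Fpath, ← ih, Nat.cast_succ, ← add_assoc, hc]

lemma iterate_apply_of_shift {α : Type*} {θ : Ω → Ω} {f : ℤ → Ω → α}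
    (hf : ∀ t ω, f t (θ ω) = f (t + 1) ω) (m : ℕ) (t : ℤ) (ω : Ω) :
    f t (θ^[m] ω) = f (t + m) ω := by
  induction m generalizing t ω with
  | zero => simp
  | succ m ih =>
    rw [Function.iterate_succ_apply, ih, hf, Nat.cast_succ, add_assoc]

variable {θ : Ω → Ω}

lemma fpath_iterate (hcov : ∀ t ω, ξ t (θ ω) = ξ (t + 1) ω) (m : ℕ) (ω : Ω) (t : ℤ) (x : S)
    (n : ℕ) :
    Fpath h ξ (θ^[m] ω) t x n = Fpath h ξ ω (t + m) x n := by
  induction n with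
  | zero => rfl
  | succ n ih =>
    rw [Fpath, Fpath, ih, iterate_apply_of_shift hcov]
    congr 2
    ring

lemma retTime_iterate (hcov : ∀ t ω, ξ t (θ ω) = ξ (t + 1) ω) (m : ℕ) (ω : Ω) (t : ℤ)
    (x z : S) :
    retTime h ξ t x z (θ^[m] ω) = retTime h ξ (t + m) x z ω := by
  simp only [retTime, fpath_iterate h ξ hcov]

end Paths

section ReturnTime

variable (h : S → Ξ → S) (ξ : ℤ → Ω → Ξ) (ω : Ω) (t : ℤ) (x z : S)

lemma lt_retTime_iff (n : ℕ) :
    (n : ℝ≥0∞) < retTime h ξ t x z ω ↔ ∀ r : ℕ, 0 < r → r ≤ n → Fpath h ξ ω t x r ≠ z := by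
  constructor
  · rintro hn r hr hrn hvis
    exact (hn.trans_le (sInf_le ⟨r, rfl, hr, hvis⟩)).not_ge (by exact_mod_cast hrn)
  · intro hn
    refine (show (n : ℝ≥0∞) < (n + 1 : ℕ) by exact_mod_cast n.lt_succ_self).trans_le
      (le_sInf ?_)
    rintro _ ⟨r, rfl, hr, hvis⟩
    by_contra hlt
    exact hn r hr (Nat.lt_succ_iff.1 (by exact_mod_cast not_le.1 hlt)) hvis

lemma exists_visit_of_retTime_lt_top (hlt : retTime h ξ t x z ω < ⊤) :
    ∃ r : ℕ, 0 < r ∧ Fpath h ξ ω t x r = z := by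
  by_contra! hno
  have hempty : {c : ℝ≥0∞ | ∃ r : ℕ, c = r ∧ 0 < r ∧ Fpath h ξ ω t x r = z} = ∅ :=
    Set.eq_empty_of_forall_notMem fun _ ⟨r, _, hr, hvis⟩ => hno r hr hvis
  simp [retTime, hempty] at hlt

lemma retTime_eq_natCast {m : ℕ} (hm : 0 < m) (hvis : Fpath h ξ ω t x m = z)
    (hmin : ∀ j : ℕ, 0 < j → j < m → Fpath h ξ ω t x j ≠ z) :
    retTime h ξ t x z ω = m := by
  refine le_antisymm (sInf_le ⟨m, rfl, hm, hvis⟩) (le_sInf ?_)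
  rintro _ ⟨r, rfl, hr, hr'⟩
  by_contra hlt
  exact hmin r hr (by exact_mod_cast not_le.1 hlt) hr'

lemma retTime_eq_top_or_natCast :
    retTime h ξ t x z ω = ⊤ ∨ ∃ m : ℕ, retTime h ξ t x z ω = m := by
  by_cases hex : ∃ r : ℕ, 0 < r ∧ Fpath h ξ ω t x r = z
  · right
    refine ⟨Nat.find hex, retTime_eq_natCast h ξ ω t x z (Nat.find_spec hex).1
      (Nat.find_spec hex).2 fun j hj hjm => fun hvis => Nat.find_min hex hjm ⟨hj, hvis⟩⟩
  · left
    by_contra hne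
    exact hex (exists_visit_of_retTime_lt_top h ξ ω t x z (lt_top_iff_ne_top.2 hne))

lemma retTime_eq_encard :
    retTime h ξ t x z ω = ({n : ℕ | (n : ℝ≥0∞) < retTime h ξ t x z ω}.encard : ℝ≥0∞) := by
  rcases retTime_eq_top_or_natCast h ξ ω t x z with htop | ⟨m, hm⟩
  · simp [htop, Set.encard_univ]
  · simp [hm, Set.Nat.encard_range]

end ReturnTime

section Counting

lemma encard_eq_tsum_indicator {ι : Type*} (s : Set ι) :
    (s.encard : ℝ≥0∞) = ∑' i, s.indicator 1 i := by
  rw [← ENNReal.tsum_set_one, tsum_subtype s (fun _ => (1 : ℝ≥0∞))]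
  rfl

lemma tsum_encard_fiber {ι α : Type*} (p : ι → Prop) (f : ι → α) :
    ∑' a, (({i | p i ∧ f i = a}.encard : ℕ∞) : ℝ≥0∞) = {i | p i}.encard := by
  simp only [encard_eq_tsum_indicator, Set.indicator_apply, Set.mem_ofPred_eq, Pi.one_apply]
  rw [ENNReal.tsum_comm]
  refine tsum_congr fun i => ?_
  by_cases hi : p i <;> simp [hi, eq_comm]

variable {ι : Type*} {A : ι → Set Ω}

lemma encard_setOf_mem_eq_tsum (ω : Ω) :
    (({i | ω ∈ A i}.encard : ℕ∞) : ℝ≥0∞) = ∑' i, (A i).indicator (fun _ => 1) ω := by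
  simp only [encard_eq_tsum_indicator, Set.indicator_apply, Set.mem_ofPred_eq, Pi.one_apply]

lemma measurable_encard_setOf [Countable ι] {m : MeasurableSpace Ω}
    (hA : ∀ i, MeasurableSet[m] (A i)) :
    Measurable[m] fun ω => (({i | ω ∈ A i}.encard : ℕ∞) : ℝ≥0∞) := by
  simp only [encard_setOf_mem_eq_tsum]
  exact Measurable.tsum fun i => measurable_const.indicator (hA i)

lemma lintegral_encard_setOf [Countable ι] [MeasurableSpace Ω] (μ : Measure Ω)
    (hA : ∀ i, MeasurableSet (A i)) :
    ∫⁻ ω, (({i | ω ∈ A i}.encard : ℕ∞) : ℝ≥0∞) ∂μ = ∑' i, μ (A i) := by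
  simp only [encard_setOf_mem_eq_tsum]
  rw [lintegral_tsum fun i => (measurable_const.indicator (hA i)).aemeasurable]
  exact tsum_congr fun i => lintegral_indicator_one (hA i)

end Counting

section Measurability

variable [MeasurableSpace S] [MeasurableSingletonClass S] {h : S → Ξ → S} {ξ : ℤ → Ω → Ξ}
  {m : MeasurableSpace Ω}

lemma measurableSet_lt_retTime {t : ℤ} {x : S}
    (hF : ∀ r, Measurable[m] fun ω => Fpath h ξ ω t x r) (z : S) (n : ℕ) :
    MeasurableSet[m] {ω | (n : ℝ≥0∞) < retTime h ξ t x z ω} := by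
  simp only [lt_retTime_iff, Set.ofPred_forall]
  exact .iInter fun r => .iInter fun _ => .iInter fun _ =>
    (hF r (measurableSet_singleton z)).compl

lemma measurable_retTime {t : ℤ} {x : S}
    (hF : ∀ r, Measurable[m] fun ω => Fpath h ξ ω t x r) (z : S) :
    Measurable[m] (retTime h ξ t x z) := by
  rw [funext (retTime_eq_encard h ξ · t x z)]
  exact measurable_encard_setOf (measurableSet_lt_retTime hF z)

variable [MeasurableSpace Ξ] [Countable S]

abbrev drivingSigma (ξ : ℤ → Ω → Ξ) (T : Set ℤ) : MeasurableSpace Ω :=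
  ⨆ t ∈ T, MeasurableSpace.comap (ξ t) ‹_›

lemma measurable_drivingSigma {T : Set ℤ} {t : ℤ} (ht : t ∈ T) :
    Measurable[drivingSigma ξ T] (ξ t) :=
  Measurable.of_comap_le (le_iSup₂ (f := fun t (_ : t ∈ T) => MeasurableSpace.comap (ξ t) _) t ht)

lemma drivingSigma_le [MeasurableSpace Ω] (hξ : ∀ t, Measurable (ξ t)) (T : Set ℤ) :
    drivingSigma ξ T ≤ ‹MeasurableSpace Ω› :=
  iSup₂_le fun t _ => (hξ t).comap_le

lemma measurable_fpath (hh : ∀ x, Measurable (h x)) {t : ℤ} {n : ℕ}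
    (hξ : ∀ k < n, Measurable[m] (ξ (t + k))) (x : S) :
    Measurable[m] fun ω => Fpath h ξ ω t x n := by
  induction n with
  | zero => exact measurable_const
  | succ n ih =>
    exact (measurable_from_prod_countable_right (f := fun p : S × Ξ => h p.1 p.2) hh).comp
      ((ih fun k hk => hξ k (by omega)).prodMk (hξ n (by omega)))

end Measurability

section LastVisit

variable {c : ℤ → S} {x : S}

lemma lastVisit_unique {a b : ℕ}
    (ha : c (-a) = x ∧ ∀ r : ℕ, 0 < r → r ≤ a → c (-a + r) ≠ x)
    (hb : c (-b) = x ∧ ∀ r : ℕ, 0 < r → r ≤ b → c (-b + r) ≠ x) : a = b := by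
  by_contra hne
  wlog hlt : a < b generalizing a b
  · exact this hb ha (Ne.symm hne) (by omega)
  refine hb.2 (b - a) (by omega) (by omega) ?_
  rw [Nat.cast_sub hlt.le, show -(b : ℤ) + (b - a) = -a by ring]
  exact ha.1

lemma exists_lastVisit (hc : ∃ t ≤ 0, c t = x) :
    ∃ n : ℕ, c (-n) = x ∧ ∀ r : ℕ, 0 < r → r ≤ n → c (-n + r) ≠ x := by
  have hex : ∃ n : ℕ, c (-n) = x := by
    obtain ⟨t, ht, hct⟩ := hc
    exact ⟨t.natAbs, by rwa [show -(t.natAbs : ℤ) = t by omega]⟩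
  refine ⟨Nat.find hex, Nat.find_spec hex, fun r hr hrn hcr => Nat.find_min hex
    (show Nat.find hex - r < Nat.find hex by omega) ?_⟩
  rwa [Nat.cast_sub hrn, neg_sub, sub_eq_neg_add]

end LastVisit

section MassTransport

variable {h : S → Ξ → S} {ξ : ℤ → Ω → Ξ}

variable (h ξ) in
def excursionVisit (t : ℤ) (x y : S) (n : ℕ) : Set Ω :=
  {ω | (n : ℝ≥0∞) < retTime h ξ t x x ω ∧ Fpath h ξ ω t x n = y}

lemma preimage_iterate_excursionVisit {θ : Ω → Ω} (hcov : ∀ t ω, ξ t (θ ω) = ξ (t + 1) ω)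
    (m : ℕ) (t : ℤ) (x y : S) (n : ℕ) :
    θ^[m] ⁻¹' excursionVisit h ξ t x y n = excursionVisit h ξ (t + m) x y n := by
  ext ω
  simp [excursionVisit, retTime_iterate h ξ hcov, fpath_iterate h ξ hcov]

lemma mem_excursionVisit_iff {ω : Ω} {c : ℤ → S} (hc : IsStatePath h ξ ω c) {x y : S} {n : ℕ}
    (hx : c (-n) = x) :
    ω ∈ excursionVisit h ξ (-n) x y n ↔ c 0 = y ∧ ∀ r : ℕ, 0 < r → r ≤ n → c (-n + r) ≠ x := by
  have hF : ∀ r : ℕ, Fpath h ξ ω (-n) x r = c (-n + r) := fun r => by rw [hc.eq_fpath, hx]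
  simp only [excursionVisit, Set.mem_ofPred_eq, lt_retTime_iff, hF, neg_add_cancel]
  exact and_comm

lemma tsum_nvisits (x : S) (ω : Ω) :
    ∑' y, (Nvisits h ξ x y ω : ℝ≥0∞) = retTime h ξ 0 x x ω := by
  rw [retTime_eq_encard]
  exact tsum_encard_fiber _ _

variable [MeasurableSpace S] [MeasurableSingletonClass S]

lemma measurableSet_excursionVisit {m : MeasurableSpace Ω} {t : ℤ} {x : S}
    (hF : ∀ r, Measurable[m] fun ω => Fpath h ξ ω t x r) (y : S) (n : ℕ) :
    MeasurableSet[m] (excursionVisit h ξ t x y n) :=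
  (measurableSet_lt_retTime hF x n).inter (hF n (measurableSet_singleton y))

lemma measurable_nvisits {m : MeasurableSpace Ω} {x : S}
    (hF : ∀ r, Measurable[m] fun ω => Fpath h ξ ω 0 x r) (y : S) :
    Measurable[m] fun ω => (Nvisits h ξ x y ω : ℝ≥0∞) :=
  measurable_encard_setOf (measurableSet_excursionVisit hF y)

variable [MeasurableSpace Ω] [MeasurableSpace Ξ] [Countable S] {P : Measure Ω} {θ : Ω → Ω}
  {β : ℤ → Ω → S} {x : S}

theorem tsum_measure_excursionVisit (hθ : MeasurePreserving θ P P)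
    (hh : ∀ x, Measurable (h x)) (hξ : ∀ t, Measurable (ξ t))
    (hcov : ∀ t ω, ξ t (θ ω) = ξ (t + 1) ω) (hβmeas : ∀ t, Measurable (β t))
    (hβcov : ∀ t ω, β t (θ ω) = β (t + 1) ω)
    (hβpath : ∀ᵐ ω ∂P, IsStatePath h ξ ω (β · ω)) (hβrec : ∀ᵐ ω ∂P, ∃ t ≤ 0, β t ω = x)
    (y : S) :
    ∑' n, P ({ω | β 0 ω = x} ∩ excursionVisit h ξ 0 x y n) = P {ω | β 0 ω = y} := by
  -- `ω ∈ D n` iff `β 0 ω = y` and the last visit of `β` to `x` at or before time `0` is at `-n`.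
  set D : ℕ → Set Ω := fun n =>
    {ω | β 0 ω = y ∧ β (-n) ω = x ∧ ∀ r : ℕ, 0 < r → r ≤ n → β (-n + r) ω ≠ x}
  have hβx : ∀ t, MeasurableSet {ω | β t ω = x} := fun t => hβmeas t (measurableSet_singleton x)
  have hD : ∀ n, MeasurableSet (D n) := fun n => by
    simp only [D, Set.ofPred_and, Set.ofPred_forall]
    exact (hβmeas 0 (measurableSet_singleton y)).inter ((hβx _).inter
      (.iInter fun r => .iInter fun _ => .iInter fun _ => (hβx _).compl))
  have hshift : ∀ n : ℕ, θ^[n] ⁻¹' ({ω | β (-n) ω = x} ∩ excursionVisit h ξ (-n) x y n) =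
      {ω | β 0 ω = x} ∩ excursionVisit h ξ 0 x y n := fun n => by
    ext ω
    simp [preimage_iterate_excursionVisit hcov, iterate_apply_of_shift hβcov]
  have hlast : ∀ n : ℕ,
      ({ω | β (-n) ω = x} ∩ excursionVisit h ξ (-n) x y n : Set Ω) =ᵐ[P] D n := fun n => by
    refine Filter.eventuallyEq_set.2 ?_
    filter_upwards [hβpath] with ω hω
    simp only [Set.mem_inter_iff, Set.mem_ofPred_eq, D]
    constructor
    · rintro ⟨hx, hv⟩
      obtain ⟨hy, hr⟩ := (mem_excursionVisit_iff hω hx).1 hv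
      exact ⟨hy, hx, hr⟩
    · rintro ⟨hy, hx, hr⟩
      exact ⟨hx, (mem_excursionVisit_iff hω hx).2 ⟨hy, hr⟩⟩
  have hdisj : Pairwise (Function.onFun Disjoint D) := fun a b hab =>
    Set.disjoint_left.2 fun ω ha hb => hab (lastVisit_unique (c := (β · ω)) ha.2 hb.2)
  have hunion : (⋃ n, D n : Set Ω) =ᵐ[P] {ω | β 0 ω = y} := by
    refine Filter.eventuallyEq_set.2 ?_
    filter_upwards [hβrec] with ω hω
    simp only [Set.mem_iUnion, Set.mem_ofPred_eq, D]
    exact ⟨fun ⟨_, hy, _⟩ => hy, fun hy => (exists_lastVisit hω).imp fun _ hn => ⟨hy, hn⟩⟩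
  calc ∑' n, P ({ω | β 0 ω = x} ∩ excursionVisit h ξ 0 x y n)
      = ∑' n, P (D n) := tsum_congr fun n => by
        rw [← hshift, (hθ.iterate n).measure_preimage, measure_congr (hlast n)]
        exact ((hβx _).inter (measurableSet_excursionVisit
          (fun r => measurable_fpath hh (fun k _ => hξ _) x) y n)).nullMeasurableSet
    _ = P {ω | β 0 ω = y} := by rw [← measure_iUnion hdisj hD, measure_congr hunion]

end MassTransport

section Stationary

variable [MeasurableSpace Ω] [MeasurableSpace Ξ] [MeasurableSpace S] [MeasurableSingletonClass S]
  [Countable S] {P : Measure Ω} {θ : Ω → Ω} {h : S → Ξ → S} {ξ : ℤ → Ω → Ξ}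
  {β : ℤ → Ω → S} {x : S}

theorem lintegral_nvisits_mul_ite (hθ : MeasurePreserving θ P P)
    (hh : ∀ x, Measurable (h x)) (hξ : ∀ t, Measurable (ξ t))
    (hcov : ∀ t ω, ξ t (θ ω) = ξ (t + 1) ω) (hβmeas : ∀ t, Measurable (β t))
    (hβcov : ∀ t ω, β t (θ ω) = β (t + 1) ω)
    (hβpath : ∀ᵐ ω ∂P, IsStatePath h ξ ω (β · ω)) (hβrec : ∀ᵐ ω ∂P, ∃ t ≤ 0, β t ω = x)
    (y : S) :
    ∫⁻ ω, (Nvisits h ξ x y ω : ℝ≥0∞) * (if β 0 ω = x then 1 else 0) ∂P = P {ω | β 0 ω = y} := by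
  have hpt : ∀ ω, (Nvisits h ξ x y ω : ℝ≥0∞) * (if β 0 ω = x then 1 else 0) =
      (({n | ω ∈ {ω | β 0 ω = x} ∩ excursionVisit h ξ 0 x y n}.encard : ℕ∞) : ℝ≥0∞) := by
    intro ω
    split_ifs with hb <;> simp [Nvisits, excursionVisit, hb]
  simp_rw [hpt]
  rw [lintegral_encard_setOf (A := fun n => {ω | β 0 ω = x} ∩ excursionVisit h ξ 0 x y n) P
    fun n => (hβmeas 0 (measurableSet_singleton x)).inter
    (measurableSet_excursionVisit (fun r => measurable_fpath hh (fun k _ => hξ _) x) y n)]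
  exact tsum_measure_excursionVisit hθ hh hξ hcov hβmeas hβcov hβpath hβrec y

theorem lintegral_retTime_mul_ite (hθ : MeasurePreserving θ P P) [IsProbabilityMeasure P]
    (hh : ∀ x, Measurable (h x)) (hξ : ∀ t, Measurable (ξ t))
    (hcov : ∀ t ω, ξ t (θ ω) = ξ (t + 1) ω) (hβmeas : ∀ t, Measurable (β t))
    (hβcov : ∀ t ω, β t (θ ω) = β (t + 1) ω)
    (hβpath : ∀ᵐ ω ∂P, IsStatePath h ξ ω (β · ω)) (hβrec : ∀ᵐ ω ∂P, ∃ t ≤ 0, β t ω = x) :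
    ∫⁻ ω, retTime h ξ 0 x x ω * (if β 0 ω = x then 1 else 0) ∂P = 1 := by
  simp_rw [← tsum_nvisits, ← ENNReal.tsum_mul_right]
  have hB : Measurable fun ω => if β 0 ω = x then (1 : ℝ≥0∞) else 0 :=
    Measurable.ite (p := fun ω => β 0 ω = x) (hβmeas 0 (measurableSet_singleton x))
      measurable_const measurable_const
  rw [lintegral_tsum fun y => ((measurable_nvisits (fun r => measurable_fpath hh
    (fun k _ => hξ _) x) y).fun_mul hB).aemeasurable]
  simp_rw [lintegral_nvisits_mul_ite hθ hh hξ hcov hβmeas hβcov hβpath hβrec]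
  have := tsum_measure_preimage_singleton (μ := P) Set.countable_univ
    (f := β 0) fun y _ => hβmeas 0 (measurableSet_singleton y)
  rwa [tsum_univ (f := fun y => P (β 0 ⁻¹' {y})), Set.preimage_univ, measure_univ] at this

end Stationary

section AncestralLine

variable {h : S → Ξ → S} {ξ : ℤ → Ω → Ξ} {ω : Ω} {x : S}

-- `(t - m, x)` is a *child* of `(t, x)` when the path started at `(t - m, x)` first returns to
-- `x` at time `t`.
lemma exists_child_on_ancestry {t : ℤ} {n : ℕ} (hn : Fpath h ξ ω (t - n) x n = x) (hn0 : 0 < n) :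
    ∃ m ≤ n, (0 < m ∧ Fpath h ξ ω (t - m) x m = x ∧
      ∀ j : ℕ, 0 < j → j < m → Fpath h ξ ω (t - m) x j ≠ x) ∧
      Fpath h ξ ω (t - n) x (n - m) = x := by
  have hex : ∃ m : ℕ, 0 < m ∧ m ≤ n ∧ Fpath h ξ ω (t - n) x (n - m) = x :=
    ⟨n, hn0, le_rfl, by rw [Nat.sub_self]; rfl⟩
  -- `t - m` is the last visit to `x` strictly before `t` of the path started at `(t - n, x)`.
  obtain ⟨hm0, hmn, hvis⟩ := Nat.find_spec hex
  set m := Nat.find hex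
  have hrestart : ∀ j : ℕ, Fpath h ξ ω (t - n) x (n - m + j) = Fpath h ξ ω (t - m) x j := by
    intro j
    rw [fpath_add, hvis, Nat.cast_sub hmn, show t - n + (n - m) = t - m by ring]
  refine ⟨m, hmn, ⟨hm0, ?_, fun j hj hjm hjvis => ?_⟩, hvis⟩
  · rw [← hrestart, Nat.sub_add_cancel hmn, hn]
  · refine Nat.find_min hex (show m - j < m by omega) ⟨by omega, by omega, ?_⟩
    rwa [show n - (m - j) = n - m + j by omega, hrestart]

lemma exists_child_with_infinite_ancestry {t : ℤ}
    (hfin : {m : ℕ | retTime h ξ (t - m) x x ω = m}.Finite)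
    (hinf : {n : ℕ | Fpath h ξ ω (t - n) x n = x}.Infinite) :
    ∃ m : ℕ, 0 < m ∧ Fpath h ξ ω (t - m) x m = x ∧
      {n : ℕ | Fpath h ξ ω (t - m - n) x n = x}.Infinite := by
  set A := {n : ℕ | Fpath h ξ ω (t - n) x n = x} \ {0}
  set K := {m : ℕ | 0 < m ∧ Fpath h ξ ω (t - m) x m = x ∧
    ∀ j : ℕ, 0 < j → j < m → Fpath h ξ ω (t - m) x j ≠ x}
  have hK : K.Finite :=
    hfin.subset fun m ⟨hm0, hvis, hmin⟩ => retTime_eq_natCast h ξ ω _ x x hm0 hvis hmin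
  have hA : A.Infinite := hinf.sdiff (Set.finite_singleton 0)
  have hchild : ∀ n ∈ A, ∃ m ∈ K, m ≤ n ∧ Fpath h ξ ω (t - n) x (n - m) = x :=
    fun n ⟨hn, hn0⟩ => (exists_child_on_ancestry hn (Nat.pos_of_ne_zero hn0)).imp
      fun m ⟨hmn, hmK, hvis⟩ => ⟨hmK, hmn, hvis⟩
  choose! f hfK hfle hfvis using hchild
  obtain ⟨m, hmK, hfiber⟩ : ∃ m ∈ K, {n ∈ A | f n = m}.Infinite := by
    by_contra! hall
    exact hA ((hK.biUnion fun m hm => hall m hm).subset fun n hn =>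
      Set.mem_biUnion (hfK n hn) ⟨hn, rfl⟩)
  refine ⟨m, hmK.1, hmK.2.1, ((hfiber.image (f := (· - m)) fun a ha b hb hab => ?_).mono ?_)⟩
  · obtain ⟨haA, rfl⟩ := ha
    obtain ⟨hbA, hfb⟩ := hb
    have := hfle a haA
    have := hfle b hbA
    simp only at hab
    omega
  · rintro _ ⟨n, ⟨hnA, rfl⟩, rfl⟩
    have := hfvis n hnA
    rwa [Set.mem_ofPred_eq, Nat.cast_sub (hfle n hnA), show t - f n - (n - f n) = t - n by ring]

lemma exists_ancestral_line (hfin : ∀ t : ℤ, {m : ℕ | retTime h ξ (t - m) x x ω = m}.Finite)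
    {t₀ : ℤ} (hinf : {n : ℕ | Fpath h ξ ω (t₀ - n) x n = x}.Infinite) :
    ∃ T : ℕ → ℤ, T 0 = t₀ ∧
      ∀ i, T (i + 1) < T i ∧ Fpath h ξ ω (T (i + 1)) x (T i - T (i + 1)).toNat = x := by
  have step : ∀ t : {t : ℤ // {n : ℕ | Fpath h ξ ω (t - n) x n = x}.Infinite},
      ∃ t' : {t : ℤ // {n : ℕ | Fpath h ξ ω (t - n) x n = x}.Infinite},
        t'.1 < t.1 ∧ Fpath h ξ ω t'.1 x (t.1 - t'.1).toNat = x := fun ⟨t, ht⟩ => by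
    obtain ⟨m, hm0, hvis, hinf'⟩ := exists_child_with_infinite_ancestry (hfin t) ht
    refine ⟨⟨t - m, hinf'⟩, show t - m < t by omega, ?_⟩
    rwa [show (t - (t - m)).toNat = m by omega]
  choose next hnext using step
  exact ⟨fun i => (next^[i] ⟨t₀, hinf⟩).1, rfl, fun i => by
    simpa only [Function.iterate_succ_apply'] using hnext _⟩

lemma le_sub_of_forall_succ_lt {T : ℕ → ℤ} (hT : ∀ i, T (i + 1) < T i) (i : ℕ) :
    T i ≤ T 0 - i := by
  induction i with
  | zero => simp
  | succ i ih => have := hT i; push_cast; omega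

lemma exists_statePath_through_line {T : ℕ → ℤ}
    (hT : ∀ i, T (i + 1) < T i ∧ Fpath h ξ ω (T (i + 1)) x (T i - T (i + 1)).toNat = x) :
    ∃ c, IsStatePath h ξ ω c ∧ ∀ i, c (T i) = x := by
  have hanti : Antitone T := antitone_nat_of_succ_le fun i => (hT i).1.le
  have hle := le_sub_of_forall_succ_lt fun i => (hT i).1
  have hcons : ∀ i j u, i ≤ j → T i ≤ u →
      Fpath h ξ ω (T j) x (u - T j).toNat = Fpath h ξ ω (T i) x (u - T i).toNat := by
    intro i j u hij hu
    induction j, hij using Nat.le_induction with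
    | base => rfl
    | succ j hij ih =>
      rw [fpath_toNat_sub h ξ ω x (hT j).1.le ((hanti hij).trans hu), (hT j).2, ih]
  let idx : ℤ → ℕ := fun u => (T 0 - u).toNat
  have hidx : ∀ u, T (idx u) ≤ u := fun u => by
    have := hle (idx u)
    simp only [idx] at this ⊢
    omega
  let c : ℤ → S := fun u => Fpath h ξ ω (T (idx u)) x (u - T (idx u)).toNat
  have hc : ∀ i u, T i ≤ u → c u = Fpath h ξ ω (T i) x (u - T i).toNat := fun i u hu => by
    rcases le_total i (idx u) with hi | hi
    · exact hcons i _ u hi hu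
    · exact (hcons _ i u hi (hidx u)).symm
  refine ⟨c, fun u => ?_, fun i => by rw [hc i (T i) le_rfl, sub_self]; rfl⟩
  have hu := hidx u
  rw [hc (idx u) (u + 1) (by omega),
    show (u + 1 - T (idx u)).toNat = (u - T (idx u)).toNat + 1 by omega, Fpath]
  congr 2
  omega

lemma IsStatePath.exists_ge_eq_of_retTime_lt_top {c : ℤ → S} (hc : IsStatePath h ξ ω c)
    (hret : ∀ s, retTime h ξ s x x ω < ⊤) {s₀ : ℤ} (hs₀ : c s₀ = x) (n : ℤ) :
    ∃ t, n ≤ t ∧ c t = x := by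
  suffices ∀ k : ℕ, ∃ t, s₀ + k ≤ t ∧ c t = x by
    obtain ⟨t, ht, hct⟩ := this (n - s₀).toNat
    exact ⟨t, by omega, hct⟩
  intro k
  induction k with
  | zero => exact ⟨s₀, by simp, hs₀⟩
  | succ k ih =>
    obtain ⟨t, ht, hct⟩ := ih
    obtain ⟨r, hr, hvis⟩ := exists_visit_of_retTime_lt_top h ξ ω t x x (hret t)
    exact ⟨t + r, by push_cast; omega, by rw [hc.eq_fpath, hct, hvis]⟩

theorem exists_birecurrent_statePath (hret : ∀ s, retTime h ξ s x x ω < ⊤)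
    (hfin : ∀ t : ℤ, {m : ℕ | retTime h ξ (t - m) x x ω = m}.Finite)
    (hinf : {n : ℕ | Fpath h ξ ω (-n) x n = x}.Infinite) :
    ∃ c, IsStatePath h ξ ω c ∧ IsBirecurrent x c ∧ c 0 = x := by
  obtain ⟨T, hT0, hT⟩ := exists_ancestral_line hfin (t₀ := 0) (by simpa using hinf)
  obtain ⟨c, hc, hcT⟩ := exists_statePath_through_line hT
  have hle := le_sub_of_forall_succ_lt fun i => (hT i).1
  refine ⟨c, hc, fun n => ⟨hc.exists_ge_eq_of_retTime_lt_top hret (hcT 0) n,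
    ⟨T (-n).toNat, by have := hle (-n).toNat; omega, hcT _⟩⟩, by rw [← hT0]; exact hcT 0⟩

end AncestralLine

section Ergodic

variable [MeasurableSpace Ω] {P : Measure Ω} {θ : Ω → Ω}

lemma measure_preimage_shift_eq (hθ : MeasurePreserving θ P P) {α : Type*} [MeasurableSpace α]
    {f : ℤ → Ω → α} (hf : ∀ t ω, f t (θ ω) = f (t + 1) ω) (hfm : ∀ t, Measurable (f t))
    {s : Set α} (hs : MeasurableSet s) (t t' : ℤ) : P (f t ⁻¹' s) = P (f t' ⁻¹' s) := by
  have key : ∀ (t : ℤ) (m : ℕ), P (f (t + m) ⁻¹' s) = P (f t ⁻¹' s) := fun t m => by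
    rw [← (hθ.iterate m).measure_preimage (hfm t hs).nullMeasurableSet]
    congr 1
    ext ω
    simp [iterate_apply_of_shift hf]
  rcases le_total t t' with htt' | htt'
  · rw [show t' = t + (t' - t).toNat by omega, key]
  · rw [show t = t' + (t - t').toNat by omega, key]

lemma ae_forall_eq_of_unique {α : Type*} {Q : Ω → α → Prop} {b : Ω → α}
    (hb : ∀ᵐ ω ∂P, Q ω (b ω))
    (huniq : ∀ g : Ω → α, (∀ᵐ ω ∂P, Q ω (g ω)) → ∀ᵐ ω ∂P, g ω = b ω) :
    ∀ᵐ ω ∂P, ∀ a, Q ω a → a = b ω := by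
  let g : Ω → α := fun ω => if hω : ∃ a, Q ω a ∧ a ≠ b ω then hω.choose else b ω
  have hg : ∀ᵐ ω ∂P, Q ω (g ω) := by
    filter_upwards [hb] with ω hω
    by_cases hex : ∃ a, Q ω a ∧ a ≠ b ω
    · simpa only [g, dif_pos hex] using hex.choose_spec.1
    · simpa only [g, dif_neg hex] using hω
  filter_upwards [huniq g hg] with ω hω a ha
  by_contra hne
  have hex : ∃ a, Q ω a ∧ a ≠ b ω := ⟨a, ha, hne⟩
  simp only [g, dif_pos hex] at hω
  exact hex.choose_spec.2 hω

variable {h : S → Ξ → S} {ξ : ℤ → Ω → Ξ} {x : S}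

lemma ae_retTime_lt_top (hθ : MeasurePreserving θ P P) (hcov : ∀ t ω, ξ t (θ ω) = ξ (t + 1) ω)
    (hm : ∀ t, Measurable (retTime h ξ t x x)) (hint : ∫⁻ ω, retTime h ξ 0 x x ω ∂P < ⊤) :
    ∀ᵐ ω ∂P, ∀ s, retTime h ξ s x x ω < ⊤ := by
  have h0 := ae_lt_top (hm 0) hint.ne
  simp only [ae_iff, lt_top_iff_ne_top, not_not] at h0
  rw [ae_all_iff]
  intro s
  simp only [ae_iff, lt_top_iff_ne_top, not_not]
  exact (measure_preimage_shift_eq hθ (fun t ω => retTime_iterate h ξ hcov 1 ω t x x) hm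
    (measurableSet_singleton ⊤) s 0).trans h0

lemma ae_finite_firstReturns [IsFiniteMeasure P] (hθ : MeasurePreserving θ P P)
    (hcov : ∀ t ω, ξ t (θ ω) = ξ (t + 1) ω) (hm : ∀ t, Measurable (retTime h ξ t x x)) :
    ∀ᵐ ω ∂P, ∀ t : ℤ, {m : ℕ | retTime h ξ (t - m) x x ω = m}.Finite := by
  rw [ae_all_iff]
  intro t
  -- Borel–Cantelli: by stationarity these are the probabilities of the disjoint events
  -- `{retTime 0 = m}`.
  have hsum : ∑' m : ℕ, P (retTime h ξ (t - m) x x ⁻¹' {(m : ℝ≥0∞)}) ≠ ⊤ := by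
    simp_rw [measure_preimage_shift_eq hθ (fun t ω => retTime_iterate h ξ hcov 1 ω t x x) hm
      (measurableSet_singleton _) _ 0]
    refine ne_top_of_le_ne_top (measure_ne_top P Set.univ)
      ((tsum_meas_le_meas_iUnion_of_disjoint P (fun m => hm 0 (measurableSet_singleton _))
        fun a b hab => ?_).trans (measure_mono (Set.subset_univ _)))
    exact Set.disjoint_singleton.2 (by exact_mod_cast hab) |>.preimage _
  filter_upwards [ae_eventually_notMem hsum] with ω hω
  rw [← Nat.cofinite_eq_atTop, Filter.eventually_cofinite] at hω
  simpa using hω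

end Ergodic

section Independence

variable [MeasurableSpace Ξ] [MeasurableSpace S] [MeasurableSingletonClass S] [Countable S]
  {h : S → Ξ → S} {ξ : ℤ → Ω → Ξ} {x : S}

variable (h ξ x) in
def infiniteAncestry : Set Ω := {ω | {n : ℕ | Fpath h ξ ω (-n) x n = x}.Infinite}

lemma measurableSet_infiniteAncestry (hh : ∀ x, Measurable (h x)) :
    MeasurableSet[drivingSigma ξ (Set.Iio 0)] (infiniteAncestry h ξ x) := by
  simp only [infiniteAncestry, ← Nat.frequently_atTop_iff_infinite, Filter.frequently_atTop,
    Set.ofPred_forall, Set.ofPred_exists, Set.ofPred_and]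
  exact .iInter fun k => .iUnion fun n => (MeasurableSet.const _).inter <|
    measurable_fpath hh (fun j hj => measurable_drivingSigma (Set.mem_Iio.2 (by omega))) x
      (measurableSet_singleton x)

variable [MeasurableSpace Ω] {P : Measure Ω} {θ : Ω → Ω} {β : ℤ → Ω → S}

lemma ae_mem_infiniteAncestry_iff [IsFiniteMeasure P] (hθ : MeasurePreserving θ P P)
    (hh : ∀ x, Measurable (h x)) (hξ : ∀ t, Measurable (ξ t))
    (hcov : ∀ t ω, ξ t (θ ω) = ξ (t + 1) ω)
    (hint : ∫⁻ ω, retTime h ξ 0 x x ω ∂P < ⊤)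
    (hβpath : ∀ᵐ ω ∂P, IsStatePath h ξ ω (β · ω))
    (hβrec : ∀ᵐ ω ∂P, IsBirecurrent x (β · ω))
    (hβunique : ∀ γ : ℤ → Ω → S, (∀ᵐ ω ∂P, IsStatePath h ξ ω (γ · ω)) →
      (∀ᵐ ω ∂P, IsBirecurrent x (γ · ω)) → ∀ᵐ ω ∂P, ∀ t, γ t ω = β t ω) :
    ∀ᵐ ω ∂P, ω ∈ infiniteAncestry h ξ x ↔ β 0 ω = x := by
  have huniq := ae_forall_eq_of_unique (Q := fun ω c => IsStatePath h ξ ω c ∧ IsBirecurrent x c)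
    (b := fun ω t => β t ω) (hβpath.and hβrec) fun g hg => by
      filter_upwards [hβunique (fun t ω => g ω t) (hg.mono fun _ => And.left)
        (hg.mono fun _ => And.right)] with ω hω using funext hω
  have hm : ∀ t, Measurable (retTime h ξ t x x) :=
    fun t => measurable_retTime (fun _ => measurable_fpath hh (fun _ _ => hξ _) x) x
  filter_upwards [hβpath, hβrec, huniq, ae_retTime_lt_top hθ hcov hm hint,
    ae_finite_firstReturns hθ hcov hm] with ω hpath hrec huniq hret hfin
  constructor
  · intro hinf
    obtain ⟨c, hc, hcrec, hc0⟩ := exists_birecurrent_statePath hret hfin hinf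
    rwa [huniq c ⟨hc, hcrec⟩] at hc0
  · intro hβ0
    refine Nat.frequently_atTop_iff_infinite.1 (Filter.frequently_atTop.2 fun k => ?_)
    obtain ⟨t, htk, hβt⟩ := (hrec (-k)).2
    refine ⟨(-t).toNat, by omega, ?_⟩
    rw [show -((-t).toNat : ℤ) = t by omega, ← hβt, ← hpath.eq_fpath,
      show t + (-t).toNat = 0 by omega, hβ0]
    exact hβt.symm

theorem lintegral_mul_ite_eq_of_iIndepFun [IsFiniteMeasure P] (hind : iIndepFun ξ P)
    (hθ : MeasurePreserving θ P P) (hh : ∀ x, Measurable (h x)) (hξ : ∀ t, Measurable (ξ t))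
    (hcov : ∀ t ω, ξ t (θ ω) = ξ (t + 1) ω)
    (hint : ∫⁻ ω, retTime h ξ 0 x x ω ∂P < ⊤)
    (hβpath : ∀ᵐ ω ∂P, IsStatePath h ξ ω (β · ω))
    (hβrec : ∀ᵐ ω ∂P, IsBirecurrent x (β · ω))
    (hβunique : ∀ γ : ℤ → Ω → S, (∀ᵐ ω ∂P, IsStatePath h ξ ω (γ · ω)) →
      (∀ᵐ ω ∂P, IsBirecurrent x (γ · ω)) → ∀ᵐ ω ∂P, ∀ t, γ t ω = β t ω)
    {f : Ω → ℝ≥0∞} (hf : Measurable[drivingSigma ξ (Set.Ici 0)] f) :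
    ∫⁻ ω, f ω * (if β 0 ω = x then 1 else 0) ∂P = (∫⁻ ω, f ω ∂P) * P {ω | β 0 ω = x} := by
  have hae := ae_mem_infiniteAncestry_iff hθ hh hξ hcov hint hβpath hβrec hβunique
  have hindep : Indep (drivingSigma ξ (Set.Ici 0)) (drivingSigma ξ (Set.Iio 0)) P :=
    indep_iSup_of_disjoint (fun t => (hξ t).comap_le) hind.iIndep
      (Set.disjoint_left.2 fun t h1 h2 => (Set.mem_Iio.1 h2).not_ge (Set.mem_Ici.1 h1))
  have hpast := measurableSet_infiniteAncestry (ξ := ξ) (x := x) hh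
  have hite : (fun ω => if β 0 ω = x then (1 : ℝ≥0∞) else 0) =ᵐ[P]
      (infiniteAncestry h ξ x).indicator 1 := by
    filter_upwards [hae] with ω hω
    by_cases hb : β 0 ω = x <;> simp [hb, hω]
  rw [lintegral_congr_ae (hite.mono fun ω hω => congrArg (f ω * ·) hω),
    lintegral_mul_eq_lintegral_mul_lintegral_of_independent_measurableSpace
      (drivingSigma_le hξ _) (drivingSigma_le hξ _) hindep hf
      (show Measurable[drivingSigma ξ (Set.Iio 0)] ((infiniteAncestry h ξ x).indicator 1) from
        measurable_const.indicator hpast),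
    lintegral_indicator_one (drivingSigma_le hξ _ _ hpast)]
  congr 1
  exact measure_congr (Filter.eventuallyEq_set.2 hae)

end Independence

end

theorem cycle_formulas_general
    {Ω S Ξ : Type*} [MeasurableSpace Ω] [MeasurableSpace Ξ] [MeasurableSpace S]
    [MeasurableSingletonClass S] [Countable S]
    (P : Measure Ω) [IsProbabilityMeasure P]
    (h : S → Ξ → S) (hhmeas : ∀ x, Measurable (h x))
    (ξ : ℤ → Ω → Ξ) (hξmeas : ∀ t, Measurable (ξ t))
    (θ : Ω → Ω) (hergo : Ergodic θ P)
    (hcov : ∀ (t : ℤ) (ω : Ω), ξ t (θ ω) = ξ (t + 1) ω)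
    (xstar : S)
    (hposrec : ∫⁻ ω, retTime h ξ 0 xstar xstar ω ∂P < ⊤)
    (β : ℤ → Ω → S) (hβmeas : ∀ t, Measurable (β t))
    (hβpath : ∀ᵐ ω ∂P, ∀ t : ℤ, β (t + 1) ω = h (β t ω) (ξ t ω))
    (hβbirec : ∀ᵐ ω ∂P, ∀ n : ℤ,
      (∃ t, n ≤ t ∧ β t ω = xstar) ∧ (∃ t, t ≤ n ∧ β t ω = xstar))
    (hβcov : ∀ (t : ℤ) (ω : Ω), β t (θ ω) = β (t + 1) ω)
    (hβunique : ∀ γ : ℤ → Ω → S,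
      (∀ᵐ ω ∂P, ∀ t : ℤ, γ (t + 1) ω = h (γ t ω) (ξ t ω)) →
      (∀ᵐ ω ∂P, ∀ n : ℤ,
        (∃ t, n ≤ t ∧ γ t ω = xstar) ∧ (∃ t, t ≤ n ∧ γ t ω = xstar)) →
      ∀ᵐ ω ∂P, ∀ t : ℤ, γ t ω = β t ω)
    (y : S) :
    (∫⁻ ω, (Nvisits h ξ xstar y ω : ℝ≥0∞)
        * (if β 0 ω = xstar then 1 else 0) ∂P = P {ω | β 0 ω = y})
    ∧ (∫⁻ ω, retTime h ξ 0 xstar xstar ω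
        * (if β 0 ω = xstar then 1 else 0) ∂P = 1)
    ∧ (iIndepFun ξ P →
        ((∫⁻ ω, (Nvisits h ξ xstar y ω : ℝ≥0∞) ∂P) * P {ω | β 0 ω = xstar}
            = P {ω | β 0 ω = y})
        ∧ (∫⁻ ω, retTime h ξ 0 xstar xstar ω ∂P) * P {ω | β 0 ω = xstar} = 1) := by
  have hθ := hergo.toMeasurePreserving
  have hβrec : ∀ᵐ ω ∂P, ∃ t ≤ 0, β t ω = xstar := hβbirec.mono fun ω hω => (hω 0).2
  have hvisits := lintegral_nvisits_mul_ite hθ hhmeas hξmeas hcov hβmeas hβcov hβpath hβrec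
  have hret := lintegral_retTime_mul_ite hθ hhmeas hξmeas hcov hβmeas hβcov hβpath hβrec
  refine ⟨hvisits y, hret, fun hind => ?_⟩
  have hF : ∀ r, Measurable[drivingSigma ξ (Set.Ici 0)] fun ω => Fpath h ξ ω 0 xstar r :=
    fun r => measurable_fpath hhmeas (fun k _ => measurable_drivingSigma (by simp)) xstar
  have hsplit := fun f => lintegral_mul_ite_eq_of_iIndepFun (f := f) hind hθ hhmeas hξmeas hcov
    hposrec hβpath hβbirec hβunique
  exact ⟨(hsplit _ (measurable_nvisits hF y)).symm.trans (hvisits y),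
    (hsplit _ (measurable_retTime hF xstar)).symm.trans hret⟩

/-- **Cycle formulas via mass transport.**  For the unique bi-recurrent state
path `β` in an a.s. connected Doeblin graph,
`𝔼[N^{(0,x⋆)}(y;x⋆) 1_{β₀=x⋆}] = P(β₀ = y)` and
`𝔼[σ^{(0,x⋆)}(x⋆) 1_{β₀=x⋆}] = 1`; in the Markovian (i.i.d. driving) case
these reduce to the classical cycle formulas with `π(y) = P(β₀ = y)`. -/
theorem cycle_formulas
    {Ω S Ξ : Type*} [MeasurableSpace Ω] [MeasurableSpace Ξ] [MeasurableSpace S]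
    [MeasurableSingletonClass S] [Countable S]
    (P : Measure Ω) [IsProbabilityMeasure P]
    (h : S → Ξ → S) (hhmeas : ∀ x, Measurable (h x))
    (ξ : ℤ → Ω → Ξ) (hξmeas : ∀ t, Measurable (ξ t))
    (θ : Ω → Ω) (hergo : Ergodic θ P)
    (hcov : ∀ (t : ℤ) (ω : Ω), ξ t (θ ω) = ξ (t + 1) ω)
    (hconn : ∀ᵐ ω ∂P, ∀ u v : ℤ × S, Merge h ξ ω u v)
    (xstar : S)
    (hposrec : ∫⁻ ω, retTime h ξ 0 xstar xstar ω ∂P < ⊤)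
    (β : ℤ → Ω → S) (hβmeas : ∀ t, Measurable (β t))
    (hβpath : ∀ᵐ ω ∂P, ∀ t : ℤ, β (t + 1) ω = h (β t ω) (ξ t ω))
    (hβbirec : ∀ᵐ ω ∂P, ∀ n : ℤ,
      (∃ t, n ≤ t ∧ β t ω = xstar) ∧ (∃ t, t ≤ n ∧ β t ω = xstar))
    (hβcov : ∀ (t : ℤ) (ω : Ω), β t (θ ω) = β (t + 1) ω)
    (hβunique : ∀ γ : ℤ → Ω → S,
      (∀ᵐ ω ∂P, ∀ t : ℤ, γ (t + 1) ω = h (γ t ω) (ξ t ω)) →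
      (∀ᵐ ω ∂P, ∀ n : ℤ,
        (∃ t, n ≤ t ∧ γ t ω = xstar) ∧ (∃ t, t ≤ n ∧ γ t ω = xstar)) →
      ∀ᵐ ω ∂P, ∀ t : ℤ, γ t ω = β t ω)
    (y : S) :
    (∫⁻ ω, (Nvisits h ξ xstar y ω : ℝ≥0∞)
        * (if β 0 ω = xstar then 1 else 0) ∂P = P {ω | β 0 ω = y})
    ∧ (∫⁻ ω, retTime h ξ 0 xstar xstar ω
        * (if β 0 ω = xstar then 1 else 0) ∂P = 1)
    ∧ (iIndepFun ξ P →
        ((∫⁻ ω, (Nvisits h ξ xstar y ω : ℝ≥0∞) ∂P) * P {ω | β 0 ω = xstar}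
            = P {ω | β 0 ω = y})
        ∧ (∫⁻ ω, retTime h ξ 0 xstar xstar ω ∂P) * P {ω | β 0 ω = xstar} = 1) :=
  cycle_formulas_general P h hhmeas ξ hξmeas θ hergo hcov xstar hposrec β hβmeas hβpath hβbirec
    hβcov hβunique y
end

section
/- Suppose the Doeblin graph has fully independent transitions with transition matrix $P$. For finite sets $E=\{x^*,x_1,\dots,x_n\}$ and $E'=\{x^*,y_1,\dots,y_m\}$ containing $x^*$, define $P_{\mathbf{B}}(E,E') := \mathbb{P}(\{x^*\}\cup\{h(y,\xi_0):y\in E\} = E')$. Then $P_{\mathbf{B}}$ satisfies the recurrence $P_{\mathbf{B}}(E,E') = \left(p_{x_n,x^*}+\sum_{i=1}^m p_{x_n,y_i}\right)P_{\mathbf{B}}(E\setminus\{x_n\},E') + \sum_{i=1}^m p_{x_n,y_i}\,P_{\mathbf{B}}(E\setminus\{x_n\},E'\setminus\{y_i\})$, with base cases $P_{\mathbf{B}}(E,E')=0$ if $\#E'>\#E+1$, $P_{\mathbf{B}}(\{x^*\},\{x^*,y\})=p_{x^*,y}$, and $P_{\mathbf{B}}(E,\{x^*\})=\prod_{y\in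 E}p_{y,x^*}$. -/
/-!
Write `X x ω := h x (ξ 0 ω)` and let `xₙ ∈ E`, `xₙ ≠ x⋆`, `T := E \ {xₙ}`. On the event
`X xₙ = z` the next slice from `E` is `insert z` of the next slice from `T`, so for `z ∈ E'` the
slice from `E` equals `E'` exactly when the slice from `T` is `E'` or `E' \ {z}` (two disjoint
events), and it never equals `E'` when `z ∉ E'`. Since `X xₙ` is independent of `(X y)_{y ∈ T}`,
summing over the value `z ∈ E'` of `X xₙ` gives
`P_𝐁(E,E') = ∑_{z ∈ E'} p_{xₙ,z} (P_𝐁(T,E') + P_𝐁(T,E' \ {z}))`, and the term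
`P_𝐁(T,E' \ {x⋆})` vanishes because every slice contains `x⋆`. The base cases are direct:
a slice from `E` has at most `#E + 1` elements, and it is `{x⋆}` exactly when every `X y`,
`y ∈ E`, equals `x⋆`, an intersection of independent events.
-/

open MeasureTheory ProbabilityTheory ENNReal
open scoped Classical

theorem MeasureTheory.measure_eq_sum_inter_fiber {Ω S : Type*} [MeasurableSpace Ω]
    [MeasurableSpace S] [MeasurableSingletonClass S] (P : Measure Ω) {Y : Ω → S}
    (hY : Measurable Y) {A : Set Ω} {F : Finset S} (hA : A ⊆ Y ⁻¹' F) :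
    P A = ∑ z ∈ F, P ({ω | Y ω = z} ∩ A) := by
  have hfiber (z : S) : MeasurableSet (Y ⁻¹' {z}) := hY (measurableSet_singleton z)
  calc P A = P.restrict A (Y ⁻¹' F) := by
        rw [Measure.restrict_apply (hY F.measurableSet), Set.inter_eq_right.mpr hA]
    _ = ∑ z ∈ F, P ({ω | Y ω = z} ∩ A) := by
        rw [← sum_measure_preimage_singleton F fun z _ => hfiber z]
        exact Finset.sum_congr rfl fun z _ => Measure.restrict_apply (hfiber z)

theorem Finset.insert_eq_iff_of_mem {α : Type*} [DecidableEq α] {A F : Finset α} {z : α}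
    (hz : z ∈ F) : insert z A = F ↔ A = F ∨ A = F.erase z := by
  constructor
  · rintro rfl
    by_cases hzA : z ∈ A
    · exact .inl (Finset.insert_eq_of_mem hzA).symm
    · exact .inr (Finset.erase_insert hzA).symm
  · rintro (rfl | rfl)
    · exact Finset.insert_eq_of_mem hz
    · exact Finset.insert_erase hz

namespace BridgeChain

variable {Ω S : Type*} [DecidableEq S]

def sliceEvent (X : S → Ω → S) (a : S) (E F : Finset S) : Set Ω :=
  {ω | insert a (E.image fun y => X y ω) = F}

variable (X : S → Ω → S) (a : S)

theorem inter_sliceEvent_insert {T F : Finset S} (x : S) {z : S} (hz : z ∈ F) :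
    {ω | X x ω = z} ∩ sliceEvent X a (insert x T) F
      = {ω | X x ω = z} ∩ (sliceEvent X a T F ∪ sliceEvent X a T (F.erase z)) := by
  ext ω
  simp only [sliceEvent, Set.mem_inter_iff, Set.mem_ofPred_eq, Set.mem_union]
  refine and_congr_right fun hxz => ?_
  rw [Finset.image_insert, hxz, Finset.insert_comm, Finset.insert_eq_iff_of_mem hz]

theorem sliceEvent_subset_preimage (T F : Finset S) {x : S} (hx : x ∈ T) :
    sliceEvent X a T F ⊆ X x ⁻¹' F := by
  intro ω (hω : _ = F)
  rw [Set.mem_preimage, Finset.mem_coe, ← hω]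
  exact Finset.mem_insert_of_mem (Finset.mem_image_of_mem _ hx)

theorem disjoint_sliceEvent (T : Finset S) {F F' : Finset S} (hFF' : F ≠ F') :
    Disjoint (sliceEvent X a T F) (sliceEvent X a T F') :=
  Set.disjoint_left.mpr fun _ hF hF' => hFF' (hF.symm.trans hF')

theorem sliceEvent_eq_empty_of_notMem (T : Finset S) {F : Finset S} (ha : a ∉ F) :
    sliceEvent X a T F = ∅ :=
  Set.eq_empty_of_forall_notMem fun _ hω => ha (hω ▸ Finset.mem_insert_self a _)

theorem sliceEvent_eq_empty_of_card_lt {T F : Finset S} (hcard : T.card + 1 < F.card) :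
    sliceEvent X a T F = ∅ := by
  refine Set.eq_empty_of_forall_notMem fun ω (hω : _ = F) => ?_
  have hle := (Finset.card_insert_le a _).trans
    (Nat.add_le_add_right (T.card_image_le (f := (X · ω))) 1)
  rw [hω] at hle
  omega

theorem sliceEvent_singleton_pair {y : S} (hy : y ≠ a) :
    sliceEvent X a {a} {a, y} = {ω | X a ω = y} := by
  ext ω
  simp [sliceEvent, ← Finset.coe_inj, Set.pair_eq_pair_iff, hy.symm]

theorem sliceEvent_singleton (E : Finset S) :
    sliceEvent X a E {a} = ⋂ y ∈ E, X y ⁻¹' {a} := by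
  ext ω
  simp [sliceEvent, Finset.eq_singleton_iff_unique_mem]

theorem sliceEvent_eq_preimage (E F : Finset S) :
    sliceEvent X a E F = (fun ω (y : E) => X y ω) ⁻¹' {u | insert a (E.attach.image u) = F} := by
  ext ω
  have himage : E.attach.image (fun y : E => X y ω) = E.image (X · ω) := by
    conv_rhs => rw [← Finset.attach_image_val (s := E), Finset.image_image]
    rfl
  simp only [sliceEvent, Set.mem_ofPred_eq, Set.mem_preimage, himage]

section Measure

variable [MeasurableSpace Ω] [MeasurableSpace S] [MeasurableSingletonClass S] (P : Measure Ω) {X}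

theorem measure_sliceEvent_singleton (hind : iIndepFun X P) (E : Finset S) :
    P (sliceEvent X a E {a}) = ∏ y ∈ E, P {ω | X y ω = a} := by
  rw [sliceEvent_singleton]
  exact hind.measure_inter_preimage_eq_mul E fun _ _ => measurableSet_singleton a

variable [Countable S]

theorem measurableSet_sliceEvent (hX : ∀ x, Measurable (X x)) (E F : Finset S) :
    MeasurableSet (sliceEvent X a E F) := by
  rw [sliceEvent_eq_preimage]
  have hXE : Measurable fun ω (y : E) => X y ω := measurable_pi_lambda _ fun y => hX y
  exact hXE (Set.to_countable _).measurableSet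

theorem measure_inter_sliceEvent_of_notMem (hX : ∀ x, Measurable (X x)) (hind : iIndepFun X P)
    {T : Finset S} {x : S} (hx : x ∉ T) (z : S) (F : Finset S) :
    P ({ω | X x ω = z} ∩ sliceEvent X a T F) = P {ω | X x ω = z} * P (sliceEvent X a T F) := by
  have hfiber : {ω | X x ω = z}
      = (fun ω (y : ({x} : Finset S)) => X y ω) ⁻¹' {u | u ⟨x, Finset.mem_singleton_self x⟩ = z} :=
    rfl
  have hindep := hind.indepFun_finset {x} T (Finset.disjoint_singleton_left.mpr hx) hX
  rw [hfiber, sliceEvent_eq_preimage]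
  exact hindep.measure_inter_preimage_eq_mul _ _ (Set.to_countable _).measurableSet
    (Set.to_countable _).measurableSet

theorem measure_sliceEvent_insert (hX : ∀ x, Measurable (X x)) (hind : iIndepFun X P)
    {T : Finset S} {x : S} (hx : x ∉ T) (F : Finset S) :
    P (sliceEvent X a (insert x T) F)
      = ∑ z ∈ F, P {ω | X x ω = z} *
          (P (sliceEvent X a T F) + P (sliceEvent X a T (F.erase z))) := by
  rw [measure_eq_sum_inter_fiber P (hX x)
    (sliceEvent_subset_preimage X a _ F (Finset.mem_insert_self x T))]
  refine Finset.sum_congr rfl fun z hz => ?_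
  have hdisj : Disjoint ({ω | X x ω = z} ∩ sliceEvent X a T F)
      ({ω | X x ω = z} ∩ sliceEvent X a T (F.erase z)) :=
    (disjoint_sliceEvent X a T (Finset.erase_ne_self.mpr hz).symm).mono
      Set.inter_subset_right Set.inter_subset_right
  rw [inter_sliceEvent_insert X a x hz, Set.inter_union_distrib_left,
    measure_union hdisj ((hX x (measurableSet_singleton z)).inter
      (measurableSet_sliceEvent a hX T _)),
    measure_inter_sliceEvent_of_notMem a P hX hind hx,
    measure_inter_sliceEvent_of_notMem a P hX hind hx, mul_add]

end Measure

end BridgeChain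

open BridgeChain

theorem bridge_chain_transition_recurrence_general
    {Ω S Ξ : Type*} [MeasurableSpace Ω] [MeasurableSpace Ξ] [MeasurableSpace S]
    [MeasurableSingletonClass S] [Countable S] [DecidableEq S]
    (P : Measure Ω)
    (h : S → Ξ → S) (hhmeas : ∀ x, Measurable (h x))
    (ξ : ℤ → Ω → Ξ) (hξmeas : ∀ t, Measurable (ξ t))
    (hfullindep : iIndepFun (fun (x : S) ω => h x (ξ 0 ω)) P)
    (p : S → S → ℝ≥0∞) (hp : ∀ x y, p x y = P {ω | h x (ξ 0 ω) = y})
    (xstar : S)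
    (PB : Finset S → Finset S → ℝ≥0∞)
    (hPB : ∀ E E' : Finset S,
      PB E E' = P {ω | insert xstar ((fun y => h y (ξ 0 ω)) '' (E : Set S)) = (E' : Set S)}) :
    -- the recurrence
    (∀ E E' : Finset S, xstar ∈ E → xstar ∈ E' →
      ∀ xn ∈ E, xn ≠ xstar →
        PB E E'
          = (p xn xstar + ∑ y ∈ E'.erase xstar, p xn y) * PB (E.erase xn) E'
            + ∑ y ∈ E'.erase xstar, p xn y * PB (E.erase xn) (E'.erase y))
    -- base case: too many states
    ∧ (∀ E E' : Finset S, xstar ∈ E → xstar ∈ E' →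
        E.card + 1 < E'.card → PB E E' = 0)
    -- base case: from the singleton
    ∧ (∀ y : S, y ≠ xstar → PB {xstar} {xstar, y} = p xstar y)
    -- base case: collapse to the singleton
    ∧ (∀ E : Finset S, xstar ∈ E → PB E {xstar} = ∏ y ∈ E, p y xstar) := by
  set X : S → Ω → S := fun x ω => h x (ξ 0 ω)
  have hX (x : S) : Measurable (X x) := (hhmeas x).comp (hξmeas 0)
  have hPB' (E F : Finset S) : PB E F = P (sliceEvent X xstar E F) := by
    rw [hPB]
    congr 1
    ext ω
    simp only [sliceEvent, Set.mem_ofPred_eq, ← Finset.coe_inj, Finset.coe_insert,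
      Finset.coe_image]
    rfl
  have hp' (x y : S) : P {ω | X x ω = y} = p x y := (hp x y).symm
  refine ⟨?_, ?_, ?_, ?_⟩
  · intro E E' _ hxE' xn hxn _
    obtain ⟨T, hxT, rfl⟩ : ∃ T, xn ∉ T ∧ E = insert xn T :=
      ⟨E.erase xn, Finset.notMem_erase xn E, (Finset.insert_erase hxn).symm⟩
    simp only [hPB', Finset.erase_insert hxT, measure_sliceEvent_insert xstar P hX hfullindep hxT,
      hp']
    rw [← Finset.add_sum_erase _ _ hxE',
      sliceEvent_eq_empty_of_notMem X xstar T (Finset.notMem_erase xstar E'), measure_empty,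
      add_zero]
    simp only [mul_add, add_mul, Finset.sum_add_distrib, Finset.sum_mul]
    ring
  · intro E E' _ _ hcard
    rw [hPB', sliceEvent_eq_empty_of_card_lt X xstar hcard, measure_empty]
  · intro y hy
    rw [hPB', sliceEvent_singleton_pair X xstar hy, hp']
  · intro E _
    rw [hPB', measure_sliceEvent_singleton xstar P hfullindep]
    exact Finset.prod_congr rfl fun y _ => hp' y xstar

/-- **Recurrence for the transition matrix of the bridge-slice chain.**  Under
fully independent transitions, the extended transition matrix
`P_𝐁(E,E') = P({x⋆} ∪ {h(y,ξ₀) : y ∈ E} = E')` on finite sets containing `x⋆`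
satisfies the stated recurrence and base cases. -/
theorem bridge_chain_transition_recurrence
    {Ω S Ξ : Type*} [MeasurableSpace Ω] [MeasurableSpace Ξ] [MeasurableSpace S]
    [MeasurableSingletonClass S] [Countable S] [DecidableEq S]
    (P : Measure Ω) [IsProbabilityMeasure P]
    (h : S → Ξ → S) (hhmeas : ∀ x, Measurable (h x))
    (ξ : ℤ → Ω → Ξ) (hξmeas : ∀ t, Measurable (ξ t))
    (hfullindep : iIndepFun (fun (x : S) ω => h x (ξ 0 ω)) P)
    (p : S → S → ℝ≥0∞) (hp : ∀ x y, p x y = P {ω | h x (ξ 0 ω) = y})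
    (xstar : S)
    (PB : Finset S → Finset S → ℝ≥0∞)
    (hPB : ∀ E E' : Finset S,
      PB E E' = P {ω | insert xstar ((fun y => h y (ξ 0 ω)) '' (E : Set S)) = (E' : Set S)}) :
    -- the recurrence
    (∀ E E' : Finset S, xstar ∈ E → xstar ∈ E' →
      ∀ xn ∈ E, xn ≠ xstar →
        PB E E'
          = (p xn xstar + ∑ y ∈ E'.erase xstar, p xn y) * PB (E.erase xn) E'
            + ∑ y ∈ E'.erase xstar, p xn y * PB (E.erase xn) (E'.erase y))
    -- base case: too many states
    ∧ (∀ E E' : Finset S, xstar ∈ E → xstar ∈ E' →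
        E.card + 1 < E'.card → PB E E' = 0)
    -- base case: from the singleton
    ∧ (∀ y : S, y ≠ xstar → PB {xstar} {xstar, y} = p xstar y)
    -- base case: collapse to the singleton
    ∧ (∀ E : Finset S, xstar ∈ E → PB E {xstar} = ∏ y ∈ E, p y xstar) :=
  bridge_chain_transition_recurrence_general P h hhmeas ξ hξmeas hfullindep p hp xstar PB hPB
end
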